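/- arXiv:2305.16270 — 6 statements merged into one kernel-verified Lean document; each statement's English description precedes it below -/
import Mathlib

section
/- For a, b ≥ 1, setting u = a^a b^b/(a+b)^(a+b) and v = sqrt((a+b)/(ab)), the function f(t) = t^a(1-t)^b satisfies the linear lower bounds f(t) ≥ u((a+b)v t − a v + 1) for 0 < t < a/(a+b), and f(t) ≥ u(−(a+b)v t + a v + 1) for a/(a+b) < t < 1. -/
/-!
On `(0, 1)` the function `f t = t ^ a * (1 - t) ^ b` has
`f'' t = t ^ (a - 2) * (1 - t) ^ (b - 2) * Q t`, where `Q = secondDerivFactor a b` satisfies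
`(a + b) * Q t = (a + b - 1) * ((a + b) * t - a) ^ 2 - a * b`, so `f` is concave within distance
`σ = 1 / ((a + b) v)` of its maximum point `μ = a / (a + b)`, where `f μ = u`. The first linear
function is the chord of the graph from `(μ - σ, 0)` to `(μ, u)`: it lies below the chord
from `(μ - σ, f (μ - σ))` on `[μ - σ, μ]` and is nonpositive to the left of `μ - σ`.
The second bound is the first one for `(b, a)` at `1 - t`.
-/

open Set

def secondDerivFactor (a b t : ℝ) : ℝ :=
  a * (a - 1) * (1 - t) ^ 2 - 2 * a * b * t * (1 - t) + b * (b - 1) * t ^ 2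

theorem secondDerivFactor_nonpos {a b t : ℝ} (hab : 1 ≤ a + b)
    (ht : (a + b) * ((a + b) * t - a) ^ 2 ≤ a * b) : secondDerivFactor a b t ≤ 0 := by
  have key : (a + b) * secondDerivFactor a b t
      = (a + b - 1) * ((a + b) * t - a) ^ 2 - a * b := by unfold secondDerivFactor; ring
  nlinarith [mul_le_mul_of_nonneg_left ht (by linarith : (0 : ℝ) ≤ a + b - 1)]

theorem hasDerivAt_rpow_mul_one_sub_rpow (a b : ℝ) {t : ℝ} (ht₀ : 0 < t) (ht₁ : t < 1) :
    HasDerivAt (fun x : ℝ => x ^ a * (1 - x) ^ b)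
      (a * (t ^ (a - 1) * (1 - t) ^ b) - b * (t ^ a * (1 - t) ^ (b - 1))) t := by
  have hpow : HasDerivAt (fun x : ℝ => x ^ a) (a * t ^ (a - 1)) t :=
    Real.hasDerivAt_rpow_const (Or.inl ht₀.ne')
  have hpow' : HasDerivAt (fun x : ℝ => (1 - x) ^ b) (b * (1 - t) ^ (b - 1) * (-1)) t :=
    (Real.hasDerivAt_rpow_const (Or.inl (sub_pos.2 ht₁).ne')).comp t
      ((hasDerivAt_id t).const_sub 1)
  exact (hpow.mul hpow').congr_deriv (by ring)

theorem rpow_mul_one_sub_rpow_second_deriv_nonpos {a b t : ℝ} (ht₀ : 0 < t) (ht₁ : t < 1)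
    (hQ : secondDerivFactor a b t ≤ 0) :
    a * ((a - 1) * (t ^ (a - 1 - 1) * (1 - t) ^ b) - b * (t ^ (a - 1) * (1 - t) ^ (b - 1)))
      - b * (a * (t ^ (a - 1) * (1 - t) ^ (b - 1)) - (b - 1) * (t ^ a * (1 - t) ^ (b - 1 - 1)))
      ≤ 0 := by
  have hs₀ : 1 - t ≠ 0 := (sub_pos.2 ht₁).ne'
  have ht_a : t ^ a = t ^ (a - 1) * t := by rw [← Real.rpow_add_one ht₀.ne', sub_add_cancel]
  have ht_a₁ : t ^ (a - 1) = t ^ (a - 1 - 1) * t := by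
    rw [← Real.rpow_add_one ht₀.ne', sub_add_cancel]
  have hs_b : (1 - t) ^ b = (1 - t) ^ (b - 1) * (1 - t) := by
    rw [← Real.rpow_add_one hs₀, sub_add_cancel]
  have hs_b₁ : (1 - t) ^ (b - 1) = (1 - t) ^ (b - 1 - 1) * (1 - t) := by
    rw [← Real.rpow_add_one hs₀, sub_add_cancel]
  rw [ht_a, hs_b, ht_a₁, hs_b₁]
  have hx : 0 < t ^ (a - 1 - 1) := Real.rpow_pos_of_pos ht₀ _
  have hy : 0 < (1 - t) ^ (b - 1 - 1) := Real.rpow_pos_of_pos (sub_pos.2 ht₁) _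
  have := mul_nonpos_of_nonneg_of_nonpos (mul_pos hx hy).le hQ
  unfold secondDerivFactor at this
  linear_combination this

theorem concaveOn_rpow_mul_one_sub_rpow {a b p q : ℝ} (hp : 0 < p) (hq : q < 1)
    (hQ : ∀ t ∈ Ioo p q, secondDerivFactor a b t ≤ 0) :
    ConcaveOn ℝ (Icc p q) (fun t : ℝ => t ^ a * (1 - t) ^ b) := by
  have mem_Ioo : ∀ t ∈ Icc p q, 0 < t ∧ t < 1 := fun t ht =>
    ⟨hp.trans_le ht.1, ht.2.trans_lt hq⟩
  refine concaveOn_of_hasDerivWithinAt2_nonpos (convex_Icc p q)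
    (f' := fun t => a * (t ^ (a - 1) * (1 - t) ^ b) - b * (t ^ a * (1 - t) ^ (b - 1)))
    (f'' := fun t =>
      a * ((a - 1) * (t ^ (a - 1 - 1) * (1 - t) ^ b) - b * (t ^ (a - 1) * (1 - t) ^ (b - 1)))
        - b * (a * (t ^ (a - 1) * (1 - t) ^ (b - 1)) - (b - 1) * (t ^ a * (1 - t) ^ (b - 1 - 1))))
    ?_ ?_ ?_ ?_
  · intro t ht
    obtain ⟨ht₀, ht₁⟩ := mem_Ioo t ht
    exact (hasDerivAt_rpow_mul_one_sub_rpow a b ht₀ ht₁).continuousAt.continuousWithinAt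
  · intro t ht
    rw [interior_Icc] at ht
    obtain ⟨ht₀, ht₁⟩ := mem_Ioo t (Ioo_subset_Icc_self ht)
    exact (hasDerivAt_rpow_mul_one_sub_rpow a b ht₀ ht₁).hasDerivWithinAt
  · intro t ht
    rw [interior_Icc] at ht
    obtain ⟨ht₀, ht₁⟩ := mem_Ioo t (Ioo_subset_Icc_self ht)
    exact (((hasDerivAt_rpow_mul_one_sub_rpow (a - 1) b ht₀ ht₁).const_mul a).sub
      ((hasDerivAt_rpow_mul_one_sub_rpow a (b - 1) ht₀ ht₁).const_mul b)).hasDerivWithinAt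
  · intro t ht
    rw [interior_Icc] at ht
    obtain ⟨ht₀, ht₁⟩ := mem_Ioo t (Ioo_subset_Icc_self ht)
    exact rpow_mul_one_sub_rpow_second_deriv_nonpos ht₀ ht₁ (hQ t ht)

theorem rpow_mul_one_sub_rpow_div_add {a b : ℝ} (ha : 0 ≤ a) (hb : 0 ≤ b) (hab : 0 < a + b) :
    (a / (a + b)) ^ a * (1 - a / (a + b)) ^ b = a ^ a * b ^ b / (a + b) ^ (a + b) := by
  rw [show 1 - a / (a + b) = b / (a + b) by field_simp; ring, Real.div_rpow ha hab.le,
    Real.div_rpow hb hab.le, div_mul_div_comm, ← Real.rpow_add hab]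

theorem concaveOn_rpow_mul_one_sub_rpow_Icc_sub {a b σ : ℝ} (hab : 1 ≤ a + b)
    (hσ : (a + b) ^ 3 * σ ^ 2 ≤ a * b) (hp : 0 < a / (a + b) - σ) (hq : a / (a + b) < 1) :
    ConcaveOn ℝ (Icc (a / (a + b) - σ) (a / (a + b))) (fun x : ℝ => x ^ a * (1 - x) ^ b) := by
  refine concaveOn_rpow_mul_one_sub_rpow hp hq fun x hx => secondDerivFactor_nonpos hab ?_
  obtain ⟨hx₁, hx₂⟩ := hx
  have hs₀ : a + b ≠ 0 := by positivity
  calc (a + b) * ((a + b) * x - a) ^ 2 = (a + b) ^ 3 * (x - a / (a + b)) ^ 2 := by field_simp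
    _ ≤ (a + b) ^ 3 * σ ^ 2 :=
      mul_le_mul_of_nonneg_left (sq_le_sq' (by linarith) (by linarith)) (by positivity)
    _ ≤ a * b := hσ

theorem ConcaveOn.sub_mul_le_of_nonneg_left {g : ℝ → ℝ} {p q t : ℝ}
    (hg : ConcaveOn ℝ (Icc p q) g) (hp : 0 ≤ g p) (hpt : p < t) (htq : t < q) :
    (t - p) * g q ≤ (q - p) * g t := by
  have := hg.neg.secant_mono_aux1 (left_mem_Icc.2 (hpt.trans htq).le)
    (right_mem_Icc.2 (hpt.trans htq).le) hpt htq
  simp only [Pi.neg_apply] at this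
  linarith [mul_nonneg (sub_nonneg.2 htq.le) hp]

theorem mul_le_rpow_mul_one_sub_rpow_of_lt {a b u v t : ℝ} (ha : 1 ≤ a) (hb : 1 ≤ b)
    (hu : u = a ^ a * b ^ b / (a + b) ^ (a + b)) (hv : v = Real.sqrt ((a + b) / (a * b)))
    (ht₀ : 0 < t) (ht : t < a / (a + b)) :
    u * ((a + b) * v * t - a * v + 1) ≤ t ^ a * (1 - t) ^ b := by
  set s := a + b
  set μ := a / s
  set w := s * v
  set p := μ - 1 / w
  have hs₀ : 0 < s := by positivity
  have hv₀ : 0 < v := hv ▸ Real.sqrt_pos.2 (by positivity)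
  have hw₀ : 0 < w := by positivity
  have hv_sq : v ^ 2 * (a * b) = s := by
    rw [hv, Real.sq_sqrt (by positivity)]; field_simp
  have hline : s * v * t - a * v + 1 = w * (t - p) := by
    simp only [p, μ, w]; field_simp; ring
  have hμ_lt_one : μ < 1 := (div_lt_one hs₀).2 (by linarith)
  have hf_nonneg : ∀ x : ℝ, 0 < x → x < 1 → 0 ≤ x ^ a * (1 - x) ^ b :=
    fun x hx₀ hx₁ => by have := sub_pos.2 hx₁; positivity
  have hu₀ : 0 ≤ u := hu ▸ by positivity
  rcases le_or_gt t p with htp | hpt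
  · calc u * (s * v * t - a * v + 1) ≤ 0 := by
          rw [hline]
          exact mul_nonpos_of_nonneg_of_nonpos hu₀
            (mul_nonpos_of_nonneg_of_nonpos hw₀.le (by linarith))
      _ ≤ t ^ a * (1 - t) ^ b := hf_nonneg t ht₀ (ht.trans hμ_lt_one)
  -- `p > 0` since `(a * v) ^ 2 = a * (a + b) / b > 1`
  have hp₀ : 0 < p := by
    have hav : 1 < a * v := by
      refine (one_lt_sq_iff₀ (by positivity)).1 ?_
      have : (a * v) ^ 2 * b = a * s := by linear_combination a * hv_sq
      nlinarith
    have : w * μ = a * v := by simp only [w, μ]; field_simp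
    simp only [p, sub_pos]
    rw [div_lt_iff₀ hw₀]
    linarith
  have hconc : ConcaveOn ℝ (Icc p μ) (fun x : ℝ => x ^ a * (1 - x) ^ b) := by
    refine concaveOn_rpow_mul_one_sub_rpow_Icc_sub (by linarith) (le_of_eq ?_) hp₀ hμ_lt_one
    rw [div_pow, one_pow, mul_one_div, div_eq_iff (by positivity)]
    linear_combination -s ^ 2 * hv_sq
  have hchord := hconc.sub_mul_le_of_nonneg_left (hf_nonneg p hp₀ (by linarith)) hpt ht
  rw [rpow_mul_one_sub_rpow_div_add (by linarith) (by linarith) hs₀, ← hu,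
    show μ - p = 1 / w by ring] at hchord
  calc u * (s * v * t - a * v + 1) = w * ((t - p) * u) := by rw [hline]; ring
    _ ≤ w * (1 / w * (t ^ a * (1 - t) ^ b)) := by gcongr
    _ = t ^ a * (1 - t) ^ b := by field_simp

theorem mul_le_rpow_mul_one_sub_rpow_of_gt {a b u v t : ℝ} (ha : 1 ≤ a) (hb : 1 ≤ b)
    (hu : u = a ^ a * b ^ b / (a + b) ^ (a + b)) (hv : v = Real.sqrt ((a + b) / (a * b)))
    (ht : a / (a + b) < t) (ht₁ : t < 1) :
    u * (-((a + b) * v * t) + a * v + 1) ≤ t ^ a * (1 - t) ^ b := by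
  have hab : 0 < a + b := by positivity
  have hlt : 1 - t < b / (b + a) := by
    rw [add_comm b, show b / (a + b) = 1 - a / (a + b) by field_simp; ring]
    linarith
  have key := mul_le_rpow_mul_one_sub_rpow_of_lt (u := u) (v := v) hb ha
    (by rw [hu, add_comm b, mul_comm (b ^ b)]) (by rw [hv, add_comm b, mul_comm b])
    (sub_pos.2 ht₁) hlt
  rw [sub_sub_cancel, mul_comm ((1 - t) ^ b)] at key
  convert key using 2
  ring

/-- Linear lower bounds for `f t = t ^ a * (1 - t) ^ b` around its maximum, where
`u = a^a b^b / (a+b)^(a+b)` and `v = √((a+b)/(ab))`. -/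
theorem stmt1 (a b : ℝ) (ha : 1 ≤ a) (hb : 1 ≤ b)
    (f : ℝ → ℝ) (hf : ∀ t, f t = t ^ a * (1 - t) ^ b)
    (u v : ℝ) (hu : u = a ^ a * b ^ b / (a + b) ^ (a + b))
    (hv : v = Real.sqrt ((a + b) / (a * b))) :
    (∀ t, 0 < t → t < a / (a + b) → u * ((a + b) * v * t - a * v + 1) ≤ f t) ∧
    (∀ t, a / (a + b) < t → t < 1 → u * (-((a + b) * v * t) + a * v + 1) ≤ f t) :=
  ⟨fun t ht₀ ht => hf t ▸ mul_le_rpow_mul_one_sub_rpow_of_lt ha hb hu hv ht₀ ht,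
    fun t ht ht₁ => hf t ▸ mul_le_rpow_mul_one_sub_rpow_of_gt ha hb hu hv ht ht₁⟩
end

section
/- For any positive integer k and any real a with 0 < a ≤ 1, the sum over l from 0 to ⌊1/a⌋ of (−1)^l C(k,l) (1−la)^{k−1} is a probability, i.e., it lies in the interval [0,1]. (It equals the probability that k arcs of length a placed independently and uniformly at random on a circle of circumference 1 cover the circle.) -/
/-!
Writing `x₊ⁿ` for the truncated power, the sum is `∑ₗ (-1)ˡ C(k,l) (1 - la)₊^(k-1)`, i.e. the
`k`-th forward difference with step `a` of `x₊^(k-1)` at `1 - ka`: the extra terms with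
`l > ⌊1/a⌋` vanish because `1 - la < 0`. Since `Δₐ x₊^(n+1)` is `(n+1)` times the integral of
`x₊ⁿ` over a window of length `a`, the differences satisfy the B-spline recursion
`Δₐ^(n+2) x₊^(n+1) (y) = (n+1) ∫₀ᵃ Δₐ^(n+1) x₊ⁿ (y+s) ds`, and induction on `n` gives
`0 ≤ Δₐ^(n+1) x₊ⁿ (y) ≤ (y + (n+1)a)₊ⁿ`. At `y = 1 - ka` the upper bound is `1`.
-/

open Set Finset fwdDiff MeasureTheory intervalIntegral

theorem fwdDiff_iter_sub_nsmul {M G : Type*} [AddCommGroup M] [AddCommGroup G] (h : M)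
    (f : M → G) (n : ℕ) (y : M) :
    (Δ_[h])^[n] f (y - n • h) =
      ∑ l ∈ range (n + 1), ((-1 : ℤ) ^ l * n.choose l) • f (y - l • h) := by
  rw [fwdDiff_iter_eq_sum_shift, ← sum_range_reflect]
  refine sum_congr rfl fun l hl => ?_
  have hl : l ≤ n := Nat.lt_succ_iff.mp (mem_range.mp hl)
  rw [Nat.add_sub_cancel, Nat.sub_sub_self hl, Nat.choose_symm hl, sub_nsmul _ hl]
  abel_nf

section IntervalIntegral

variable {E : Type*} [NormedAddCommGroup E] {f : ℝ → E}

lemma intervalIntegrable_fwdDiff (hf : ∀ c d, IntervalIntegrable f volume c d) (h c d : ℝ) :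
    IntervalIntegrable (Δ_[h] f) volume c d := by
  have hshift := (hf (c + h) (d + h)).comp_add_right h
  simp only [add_sub_cancel_right] at hshift
  exact hshift.sub (hf c d)

lemma intervalIntegrable_fwdDiff_iter (hf : ∀ c d, IntervalIntegrable f volume c d) (h : ℝ)
    (n : ℕ) (c d : ℝ) : IntervalIntegrable ((Δ_[h])^[n] f) volume c d := by
  induction n generalizing c d with
  | zero => exact hf c d
  | succ n ih =>
    rw [Function.iterate_succ_apply']
    exact intervalIntegrable_fwdDiff ih h c d

lemma fwdDiff_iter_integral_comp_add [NormedSpace ℝ E]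
    (hf : ∀ c d, IntervalIntegrable f volume c d) (h a b : ℝ) (n : ℕ) (y : ℝ) :
    (Δ_[h])^[n] (fun t => ∫ s in a..b, f (t + s)) y = ∫ s in a..b, (Δ_[h])^[n] f (y + s) := by
  induction n generalizing f with
  | zero => rfl
  | succ n ih =>
    have hshift (t : ℝ) : IntervalIntegrable (fun s => f (t + s)) volume a b := by
      simpa using (hf (t + a) (t + b)).comp_add_left t
    have hdiff : Δ_[h] (fun t => ∫ s in a..b, f (t + s)) =
        fun t => ∫ s in a..b, Δ_[h] f (t + s) := by
      ext t
      simp only [fwdDiff, add_right_comm t _ h]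
      exact (integral_sub (hshift (t + h)) (hshift t)).symm
    rw [Function.iterate_succ_apply, hdiff, ih (intervalIntegrable_fwdDiff hf h)]
    rfl

end IntervalIntegral

/-- `x₊ⁿ`. The condition is `0 ≤ x` rather than `0 < x` so that `truncPow n x = x ^ n` on all of
`[0, ∞)`, including `truncPow 0 0 = 0 ^ 0 = 1`, matching the summands `(1 - la) ^ 0` at `la = 1`. -/
noncomputable def truncPow (n : ℕ) (x : ℝ) : ℝ := if 0 ≤ x then x ^ n else 0

lemma truncPow_of_nonneg {n : ℕ} {x : ℝ} (hx : 0 ≤ x) : truncPow n x = x ^ n := if_pos hx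

lemma truncPow_of_neg {n : ℕ} {x : ℝ} (hx : x < 0) : truncPow n x = 0 := if_neg hx.not_ge

lemma truncPow_nonneg (n : ℕ) (x : ℝ) : 0 ≤ truncPow n x := by
  unfold truncPow
  split_ifs
  · positivity
  · rfl

lemma monotone_truncPow (n : ℕ) : Monotone (truncPow n) := by
  intro x y hxy
  rcases lt_or_ge x 0 with hx | hx
  · rw [truncPow_of_neg hx]
    exact truncPow_nonneg n y
  · rw [truncPow_of_nonneg hx, truncPow_of_nonneg (hx.trans hxy)]
    gcongr

lemma intervalIntegrable_truncPow (n : ℕ) (c d : ℝ) :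
    IntervalIntegrable (truncPow n) volume c d :=
  (monotone_truncPow n).intervalIntegrable

lemma continuous_truncPow_succ (n : ℕ) : Continuous (truncPow (n + 1)) :=
  continuous_if_le continuous_const continuous_id (continuous_pow _).continuousOn
    continuousOn_const fun x hx => by simp [← hx]

lemma hasDerivWithinAt_truncPow_succ (n : ℕ) (x : ℝ) :
    HasDerivWithinAt (truncPow (n + 1)) ((n + 1) * truncPow n x) (Ici x) x := by
  rcases lt_or_ge x 0 with hx | hx
  · rw [truncPow_of_neg hx, mul_zero]
    refine (hasDerivAt_const x (0 : ℝ)).hasDerivWithinAt.congr_of_eventuallyEq ?_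
      (truncPow_of_neg hx)
    filter_upwards [nhdsWithin_le_nhds (Iio_mem_nhds hx)] with y hy using truncPow_of_neg hy
  · rw [truncPow_of_nonneg hx]
    refine ((hasDerivAt_pow (n + 1) x).hasDerivWithinAt.congr
      (fun y hy => truncPow_of_nonneg (hx.trans hy)) (truncPow_of_nonneg hx)).congr_deriv ?_
    push_cast
    ring

lemma integral_truncPow (n : ℕ) (c d : ℝ) :
    ∫ s in c..d, truncPow n s = (truncPow (n + 1) d - truncPow (n + 1) c) / (n + 1) := by
  rw [eq_div_iff (by positivity), mul_comm, ← intervalIntegral.integral_const_mul]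
  exact integral_eq_sub_of_hasDeriv_right (continuous_truncPow_succ n).continuousOn
    (fun x _ => (hasDerivWithinAt_truncPow_succ n x).mono Ioi_subset_Ici_self)
    ((intervalIntegrable_truncPow n c d).const_mul _)

lemma fwdDiff_truncPow_succ (n : ℕ) (a : ℝ) :
    Δ_[a] (truncPow (n + 1)) = (n + 1 : ℝ) • fun t => ∫ s in (0 : ℝ)..a, truncPow n (t + s) := by
  ext t
  rw [Pi.smul_apply, integral_comp_add_left, integral_truncPow, smul_eq_mul,
    mul_div_cancel₀ _ (by positivity), add_zero]
  rfl

lemma fwdDiff_iter_truncPow_succ (n : ℕ) (a y : ℝ) :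
    (Δ_[a])^[n + 2] (truncPow (n + 1)) y =
      (n + 1) * ∫ s in (0 : ℝ)..a, (Δ_[a])^[n + 1] (truncPow n) (y + s) := by
  rw [Function.iterate_succ_apply, fwdDiff_truncPow_succ, fwdDiff_iter_const_smul,
    Pi.smul_apply, fwdDiff_iter_integral_comp_add (intervalIntegrable_truncPow n), smul_eq_mul]

theorem fwdDiff_iter_truncPow_mem_Icc (n : ℕ) {a : ℝ} (ha : 0 ≤ a) (y : ℝ) :
    (Δ_[a])^[n + 1] (truncPow n) y ∈ Set.Icc 0 (truncPow n (y + (n + 1) * a)) := by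
  induction n generalizing y with
  | zero =>
    have hmono := monotone_truncPow 0 (show y ≤ y + a by linarith)
    have hnonneg := truncPow_nonneg 0 y
    simp only [Function.iterate_one, fwdDiff, CharP.cast_eq_zero, zero_add, one_mul]
    constructor <;> linarith
  | succ n ih =>
    rw [fwdDiff_iter_truncPow_succ]
    constructor
    · exact mul_nonneg (by positivity) (integral_nonneg ha fun s _ => (ih _).1)
    have hdiff_int : IntervalIntegrable
        (fun s => (Δ_[a])^[n + 1] (truncPow n) (y + s)) volume 0 a := by
      simpa using ((intervalIntegrable_fwdDiff_iter (intervalIntegrable_truncPow n) a (n + 1)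
        (y + 0) (y + a)).comp_add_left y)
    have hpow_int : IntervalIntegrable
        (fun s => truncPow n (y + (n + 1) * a + s)) volume 0 a :=
      ((monotone_truncPow n).comp fun _ _ hst => add_le_add_right hst _).intervalIntegrable
    calc (n + 1 : ℝ) * ∫ s in (0 : ℝ)..a, (Δ_[a])^[n + 1] (truncPow n) (y + s)
        ≤ (n + 1) * ∫ s in (0 : ℝ)..a, truncPow n (y + (n + 1) * a + s) := by
          gcongr
          refine integral_mono_on ha hdiff_int hpow_int fun s _ => ?_
          simpa only [add_right_comm] using (ih (y + s)).2
      _ = truncPow (n + 1) (y + (n + 1 + 1) * a) - truncPow (n + 1) (y + (n + 1) * a) := by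
          rw [integral_comp_add_left, integral_truncPow, mul_div_cancel₀ _ (by positivity)]
          ring_nf
      _ ≤ truncPow (n + 1) (y + (↑(n + 1) + 1) * a) := by
          push_cast
          linarith [truncPow_nonneg (n + 1) (y + (n + 1) * a)]

lemma sum_range_floor_eq_fwdDiff_iter_truncPow (n : ℕ) {a : ℝ} (ha : 0 < a) :
    ∑ l ∈ range (⌊1 / a⌋₊ + 1), (-1 : ℝ) ^ l * ((n + 1).choose l) * (1 - l * a) ^ n =
      (Δ_[a])^[n + 1] (truncPow n) (1 - (n + 1) • a) := by
  set g : ℕ → ℝ := fun l => (-1) ^ l * ((n + 1).choose l) * truncPow n (1 - l * a)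
  have hfloor (l : ℕ) : l ≤ ⌊1 / a⌋₊ ↔ 0 ≤ 1 - l * a := by
    rw [Nat.le_floor_iff (by positivity), le_div_iff₀ ha, sub_nonneg]
  have hg_floor : ∀ l ≥ ⌊1 / a⌋₊ + 1, g l = 0 := fun l hl => by
    simp [g, truncPow_of_neg (not_le.mp (mt (hfloor l).2 (by omega)))]
  have hg_choose : ∀ l ≥ n + 2, g l = 0 := fun l hl => by
    simp [g, Nat.choose_eq_zero_of_lt (by omega : n + 1 < l)]
  calc _ = ∑ l ∈ range (⌊1 / a⌋₊ + 1), g l :=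
        sum_congr rfl fun l hl => by
          rw [← truncPow_of_nonneg ((hfloor l).1 (Nat.lt_succ_iff.mp (mem_range.mp hl)))]
    _ = ∑ l ∈ range (max (⌊1 / a⌋₊ + 1) (n + 2)), g l :=
        (eventually_constant_sum hg_floor (le_max_left _ _)).symm
    _ = ∑ l ∈ range (n + 2), g l := eventually_constant_sum hg_choose (le_max_right _ _)
    _ = _ := by
        rw [fwdDiff_iter_sub_nsmul]
        simp [g, zsmul_eq_mul, nsmul_eq_mul]

theorem stmt6_general (k : ℕ) (hk : 1 ≤ k) (a : ℝ) (ha : 0 < a) :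
    (∑ l ∈ Finset.range (⌊1 / a⌋₊ + 1),
        (-1 : ℝ) ^ l * (k.choose l : ℝ) * (1 - l * a) ^ (k - 1)) ∈ Set.Icc (0:ℝ) 1 := by
  obtain ⟨n, rfl⟩ : ∃ n, k = n + 1 := ⟨k - 1, by omega⟩
  rw [Nat.add_sub_cancel, sum_range_floor_eq_fwdDiff_iter_truncPow n ha]
  simpa [nsmul_eq_mul, truncPow_of_nonneg] using
    fwdDiff_iter_truncPow_mem_Icc n ha.le (1 - (n + 1) • a)

/-- For a positive integer `k` and `a ∈ (0,1]`, the quantity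
`Σ_{l=0}^{⌊1/a⌋} (-1)^l C(k,l) (1-la)^(k-1)` lies in `[0,1]`
(it is the probability that `k` random arcs of length `a` cover the circle). -/
theorem stmt6 (k : ℕ) (hk : 1 ≤ k) (a : ℝ) (ha : 0 < a) (ha1 : a ≤ 1) :
    (∑ l ∈ Finset.range (⌊1 / a⌋₊ + 1),
        (-1 : ℝ) ^ l * (k.choose l : ℝ) * (1 - l * a) ^ (k - 1)) ∈ Set.Icc (0:ℝ) 1 :=
  stmt6_general k hk a ha
end

section
/- If k arcs of fixed length a ∈ (0,1) are placed on the circle of circumference 1, with their left endpoints sampled independently and uniformly, then the probability that the arcs cover the entire circle equals Σ_{l=0}^{⌊1/a⌋} (−1)^l C(k,l) (1−la)^{k−1}. -/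
/-!
The arcs fail to cover the circle exactly when some left endpoint `x i` is followed by a gap
longer than `a`, i.e. no endpoint lies in the half-open arc `(x i, x i + a]`. By
inclusion–exclusion it therefore suffices to show that, for every set `T` of `l` indices, all
`x i` with `i ∈ T` are followed by long gaps with probability `max (1 - l a) 0 ^ (k - 1)`.

Given the points indexed by `T`, each of the other `k - l` points has to avoid `l` disjoint arcs
of length `a`, which contributes `(1 - l a) ^ (k - l)`. For the points of `T` themselves,
rotation invariance pins one of them at `0`; the other `l - 1` then form a configuration in
`(a, 1 - a)` with mutual distances `> a`. After sorting, subtracting `t a` from the `t`-th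
point maps these configurations onto the sorted configurations in an interval of length
`1 - l a`, so they have the volume `(1 - l a) ^ (l - 1)` of the corresponding cube.
-/

open MeasureTheory Set Function

section Diagonal

variable {ι α : Type*} [Fintype ι] [MeasurableSpace α] [MeasurableEq α]
  (μ : Measure α) [SigmaFinite μ] [NullSingletonClass μ]

theorem pi_diagonal_null {i j : ι} (hij : i ≠ j) :
    Measure.pi (fun _ : ι => μ) {u | u i = u j} = 0 := by
  classical
  let D : Set (({l // l = i} → α) × ({l // l ≠ i} → α)) :=
    {q | q.1 ⟨i, rfl⟩ = q.2 ⟨j, hij.symm⟩}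
  have hD : MeasurableSet D :=
    measurableSet_eq_fun ((measurable_pi_apply _).comp measurable_fst)
      ((measurable_pi_apply _).comp measurable_snd)
  have hslice (x) : Measure.pi (fun _ : {l // l ≠ i} => μ) (Prod.mk x ⁻¹' D) = 0 := by
    simpa only [D, preimage_ofPred_eq, eq_comm] using
      Measure.pi_hyperplane (fun _ : {l // l ≠ i} => μ) ⟨j, hij.symm⟩ (x ⟨i, rfl⟩)
  change Measure.pi _
    (MeasurableEquiv.piEquivPiSubtypeProd (fun _ : ι => α) (· = i) ⁻¹' D) = 0
  rw [(measurePreserving_piEquivPiSubtypeProd _ _).measure_preimage hD.nullMeasurableSet,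
    Measure.prod_apply hD]
  simp [hslice]

theorem ae_injective_pi : ∀ᵐ u ∂Measure.pi (fun _ : ι => μ), Injective u := by
  have hne (i j : ι) : ∀ᵐ u ∂Measure.pi (fun _ : ι => μ), i ≠ j → u i ≠ u j := by
    by_cases hij : i = j
    · simp [hij]
    · filter_upwards [measure_eq_zero_iff_ae_notMem.1 (pi_diagonal_null μ hij)] with u hu
      exact fun _ => hu
  filter_upwards [ae_all_iff.2 fun i => ae_all_iff.2 (hne i)] with u hu i j huij
  by_contra hij
  exact hu i j hij huij

end Diagonal

theorem measureReal_biInter_compl_eq_sum_powerset {α ι : Type*} [MeasurableSpace α]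
    (μ : Measure α) [IsProbabilityMeasure μ] {s : Finset ι} {B : ι → Set α}
    (hB : ∀ i ∈ s, MeasurableSet (B i)) :
    μ.real (⋂ i ∈ s, (B i)ᶜ) =
      ∑ u ∈ s.powerset, (-1 : ℝ) ^ u.card * μ.real (⋂ i ∈ u, B i) := by
  classical
  have hempty : s.powerset.filter (fun u => ¬u.Nonempty) = {∅} := by
    ext u
    simp only [Finset.mem_filter, Finset.mem_powerset, Finset.not_nonempty_iff_eq_empty,
      Finset.mem_singleton]
    exact ⟨fun h => h.2, fun h => ⟨h ▸ Finset.empty_subset _, h⟩⟩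
  rw [← compl_iUnion₂, measureReal_compl (Finset.measurableSet_biUnion _ hB),
    measureReal_biUnion_eq_sum_powerset hB, probReal_univ,
    ← Finset.sum_filter_add_sum_filter_not s.powerset (fun u => u.Nonempty), hempty]
  simp [pow_succ, Finset.sum_neg_distrib, sub_eq_neg_add]

theorem measurable_finCons {G : Type*} [MeasurableSpace G] {n : ℕ} (c : G) :
    Measurable fun w : Fin n → G => (Fin.cons c w : Fin (n + 1) → G) :=
  measurable_pi_iff.2 fun i => Fin.cases measurable_const measurable_pi_apply i

theorem measure_pi_eq_measure_cons_zero {G : Type*} [AddGroup G] [MeasurableSpace G]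
    [MeasurableAdd₂ G] [MeasurableNeg G] (μ : Measure G) [IsProbabilityMeasure μ]
    [μ.IsAddRightInvariant] {n : ℕ} {E : Set (Fin (n + 1) → G)} (hE : MeasurableSet E)
    (hinv : ∀ x c, (fun i => x i + c) ∈ E ↔ x ∈ E) :
    Measure.pi (fun _ => μ) E = Measure.pi (fun _ => μ) {w | Fin.cons 0 w ∈ E} := by
  let Φ (x : Fin (n + 1) → G) : G × (Fin n → G) := (x 0, fun j => x j.succ - x 0)
  have hΦ : MeasurePreserving Φ (Measure.pi fun _ => μ) (μ.prod (Measure.pi fun _ => μ)) :=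
    ((MeasurePreserving.id μ).skew_product (g := fun c (w : Fin n → G) => w - fun _ => c)
      (by fun_prop) (ae_of_all _ fun c => (measurePreserving_sub_right _ _).map_eq)).comp
      (measurePreserving_piFinSuccAbove (fun _ => μ) 0)
  have hpre : E = Φ ⁻¹' (univ ×ˢ {w | Fin.cons 0 w ∈ E}) := by
    ext x
    have : (Fin.cons 0 (Φ x).2 : Fin (n + 1) → G) = fun i => x i + -x 0 := by
      ext i
      cases i using Fin.cases <;> simp [Φ, sub_eq_add_neg]
    simp [this, hinv]
  have hslice : MeasurableSet {w : Fin n → G | Fin.cons 0 w ∈ E} :=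
    hE.preimage (measurable_finCons 0)
  conv_lhs => rw [hpre]
  rw [hΦ.measure_preimage (MeasurableSet.univ.prod hslice).nullMeasurableSet, Measure.prod_prod,
    measure_univ, one_mul]

section Spacing

variable {M : ℕ}

theorem measurableSet_strictMono : MeasurableSet {w : Fin M → ℝ | StrictMono w} := by
  simp only [StrictMono, ofPred_forall]
  exact .iInter fun s => .iInter fun t => .iInter fun _ =>
    measurableSet_lt (measurable_pi_apply _) (measurable_pi_apply _)

theorem measurePreserving_comp_perm (σ : Equiv.Perm (Fin M)) :
    MeasurePreserving (fun y : Fin M → ℝ => y ∘ σ) := by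
  have h : ⇑(MeasurableEquiv.piCongrLeft (fun _ => ℝ) σ.symm) =
      fun y : Fin M → ℝ => y ∘ σ := by
    ext y t
    simp [MeasurableEquiv.coe_piCongrLeft, Equiv.piCongrLeft_apply]
  exact h ▸ volume_measurePreserving_piCongrLeft (fun _ => ℝ) σ.symm

theorem measure_eq_sum_inter_strictMono_comp {ν : Measure (Fin M → ℝ)}
    (hν : ∀ᵐ y ∂ν, Injective y) {W : Set (Fin M → ℝ)} (hW : MeasurableSet W) :
    ν W = ∑ σ : Equiv.Perm (Fin M), ν (W ∩ {y | StrictMono (y ∘ σ)}) := by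
  have hsort : W =ᵐ[ν] ⋃ σ : Equiv.Perm (Fin M), W ∩ {y | StrictMono (y ∘ σ)} := by
    refine Filter.eventuallyEq_set.2 ?_
    filter_upwards [hν] with y hy
    simp only [mem_iUnion, mem_inter_iff, mem_ofPred_eq, exists_and_left, iff_self_and]
    exact fun _ =>
      ⟨_, (Tuple.monotone_sort y).strictMono_of_injective (hy.comp (Equiv.injective _))⟩
  have hmeas (σ : Equiv.Perm (Fin M)) : MeasurableSet (W ∩ {y | StrictMono (y ∘ σ)}) :=
    hW.inter (measurableSet_strictMono.preimage (measurePreserving_comp_perm σ).measurable)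
  rw [measure_congr hsort, measure_iUnion _ hmeas, tsum_fintype]
  intro σ τ hστ
  refine disjoint_left.2 fun y hσ hτ => hστ ?_
  have hy : Injective y := by
    simpa [comp_assoc] using hσ.2.injective.comp σ.symm.injective
  exact Equiv.ext fun t => hy (congrFun (Tuple.unique_monotone hσ.2.monotone hτ.2.monotone) t)

def separatedIoo (a lo hi : ℝ) (M : ℕ) : Set (Fin M → ℝ) :=
  {y | (∀ i, y i ∈ Ioo lo hi) ∧ ∀ i j, y j ∉ Ioc (y i) (y i + a)}

def sortedIoo (lo hi : ℝ) (M : ℕ) : Set (Fin M → ℝ) :=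
  {w | StrictMono w ∧ ∀ t, w t ∈ Ioo lo hi}

variable {a lo hi : ℝ}

theorem comp_perm_mem_separatedIoo (σ : Equiv.Perm (Fin M)) {y : Fin M → ℝ} :
    y ∘ σ ∈ separatedIoo a lo hi M ↔ y ∈ separatedIoo a lo hi M := by
  refine ⟨fun ⟨hIoo, hgap⟩ => ⟨fun i => ?_, fun i j => ?_⟩,
    fun ⟨hIoo, hgap⟩ => ⟨fun i => hIoo _, fun i j => hgap _ _⟩⟩
  · simpa using hIoo (σ.symm i)
  · simpa using hgap (σ.symm i) (σ.symm j)

theorem mem_separatedIoo_and_strictMono_iff (ha : 0 ≤ a) {v : Fin M → ℝ} :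
    v ∈ separatedIoo a lo hi M ∧ StrictMono v ↔
      v - (fun t : Fin M => ((t : ℕ) : ℝ) * a) ∈ sortedIoo lo (hi - (M - 1) * a) M := by
  rcases M with _ | m
  · simp [separatedIoo, sortedIoo, StrictMono]
  set w := v - fun t : Fin (m + 1) => ((t : ℕ) : ℝ) * a
  have hv (t) : v t = w t + (t : ℕ) * a := by simp [w]
  push_cast
  simp only [separatedIoo, sortedIoo, mem_ofPred_eq, mem_Ioo, mem_Ioc, not_and, not_le]
  constructor
  · rintro ⟨⟨hIoo, hgap⟩, hmono⟩
    have hw : StrictMono w := Fin.strictMono_iff_lt_succ.2 fun t => by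
      have := hgap t.castSucc t.succ (hmono t.castSucc_lt_succ)
      simp only [w, Pi.sub_apply, Fin.val_succ, Fin.val_castSucc]
      push_cast
      linarith
    refine ⟨hw, fun t => ⟨?_, ?_⟩⟩
    · calc lo < w 0 := by simpa [w] using (hIoo 0).1
        _ ≤ w t := hw.monotone (Fin.zero_le t)
    · calc w t ≤ w (Fin.last m) := hw.monotone (Fin.le_last t)
        _ < hi - (m + 1 - 1) * a := by
          simp only [w, Pi.sub_apply, Fin.val_last]
          linarith [(hIoo (Fin.last m)).2]
  · rintro ⟨hw, hb⟩
    have hmono : StrictMono v := by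
      have : v = w + fun t : Fin (m + 1) => ((t : ℕ) : ℝ) * a := by ext t; exact hv t
      rw [this]
      exact hw.add_monotone fun s t hst => mul_le_mul_of_nonneg_right (by exact_mod_cast hst) ha
    refine ⟨⟨fun t => ⟨?_, ?_⟩, fun i j hij => ?_⟩, hmono⟩
    · rw [hv]; nlinarith [(hb t).1, (t : ℕ).cast_nonneg (α := ℝ)]
    · have : ((t : ℕ) : ℝ) ≤ m := by exact_mod_cast Nat.lt_succ_iff.1 t.isLt
      rw [hv]; nlinarith [(hb t).2]
    · have hlt : i < j := hmono.lt_iff_lt.1 hij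
      have : ((i : ℕ) : ℝ) + 1 ≤ (j : ℕ) := by exact_mod_cast hlt
      rw [hv i, hv j]; nlinarith [hw hlt]

theorem measurableSet_sortedIoo : MeasurableSet (sortedIoo lo hi M) := by
  have : sortedIoo lo hi M = {w | StrictMono w} ∩ univ.pi fun _ => Ioo lo hi := by
    ext w; simp [sortedIoo]
  exact this ▸ measurableSet_strictMono.inter (.univ_pi fun _ => measurableSet_Ioo)

theorem volume_separatedIoo (ha : 0 ≤ a) :
    volume (separatedIoo a lo hi M) = ENNReal.ofReal (hi - lo - (M - 1) * a) ^ M := by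
  set hi' := hi - (M - 1) * a
  have hsorted (σ : Equiv.Perm (Fin M)) (c : Fin M → ℝ) :
      volume {y : Fin M → ℝ | y ∘ σ - c ∈ sortedIoo lo hi' M} =
        volume (sortedIoo lo hi' M) :=
    ((measurePreserving_sub_right volume c).comp (measurePreserving_comp_perm σ)).measure_preimage
      measurableSet_sortedIoo.nullMeasurableSet
  have hsep : MeasurableSet (separatedIoo a lo hi M) := by unfold separatedIoo; measurability
  have hinj : ∀ᵐ y : Fin M → ℝ, Injective y := ae_injective_pi volume
  have hbox : MeasurableSet (univ.pi fun _ : Fin M => Ioo lo hi') :=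
    .univ_pi fun _ => measurableSet_Ioo
  calc volume (separatedIoo a lo hi M)
      = ∑ σ : Equiv.Perm (Fin M),
          volume (univ.pi (fun _ => Ioo lo hi') ∩ {y | StrictMono (y ∘ σ)}) := by
        rw [measure_eq_sum_inter_strictMono_comp hinj hsep]
        refine Finset.sum_congr rfl fun σ _ => ?_
        have h1 : separatedIoo a lo hi M ∩ {y | StrictMono (y ∘ σ)} =
            {y | y ∘ σ - (fun t : Fin M => ((t : ℕ) : ℝ) * a) ∈ sortedIoo lo hi' M} := by
          ext y
          rw [mem_ofPred_eq, ← mem_separatedIoo_and_strictMono_iff ha, comp_perm_mem_separatedIoo]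
          rfl
        have h2 : univ.pi (fun _ => Ioo lo hi') ∩ {y | StrictMono (y ∘ σ)} =
            {y | y ∘ σ - 0 ∈ sortedIoo lo hi' M} := by
          ext y
          simp only [sortedIoo, sub_zero, mem_inter_iff, mem_pi, mem_univ, forall_const,
            mem_ofPred_eq, comp_apply]
          exact ⟨fun ⟨hIoo, hmono⟩ => ⟨hmono, fun t => hIoo _⟩,
            fun ⟨hmono, hIoo⟩ => ⟨fun i => by simpa using hIoo (σ.symm i), hmono⟩⟩
        rw [h1, h2, hsorted, hsorted]
    _ = volume (univ.pi fun _ : Fin M => Ioo lo hi') :=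
        (measure_eq_sum_inter_strictMono_comp hinj hbox).symm
    _ = ENNReal.ofReal (hi - lo - (M - 1) * a) ^ M := by
        simp [Real.volume_pi_Ioo, hi', sub_right_comm]

end Spacing

section Circle

instance : IsProbabilityMeasure (volume : Measure (AddCircle (1 : ℝ))) :=
  ⟨by simp [AddCircle.measure_univ]⟩

-- With this instance, Mathlib's instances for Haar measures show that `volume` has no atoms.
instance : Nontrivial (AddCircle (1 : ℝ)) :=
  ⟨0, ((1 / 2 : ℝ) : AddCircle (1 : ℝ)), fun h => by
    have := (AddCircle.coe_eq_coe_iff_of_mem_Ico (p := (1 : ℝ)) (a := 0) (x := 0) (y := 1 / 2)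
      (by norm_num) (by norm_num)).1 (by simpa using h)
    norm_num at this⟩

def arcIoc (a : ℝ) : Set (AddCircle (1 : ℝ)) := ((↑) : ℝ → AddCircle (1 : ℝ)) '' Ioc 0 a

variable {a : ℝ}

theorem coe_mem_image_iff_of_subset_Ico {s : Set ℝ} (hs : s ⊆ Ico 0 1) {t : ℝ}
    (ht : t ∈ Ico 0 1) :
    (t : AddCircle (1 : ℝ)) ∈ ((↑) : ℝ → AddCircle (1 : ℝ)) '' s ↔ t ∈ s := by
  refine ⟨fun ⟨r, hr, hrt⟩ => ?_, fun h => mem_image_of_mem _ h⟩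
  rw [AddCircle.coe_eq_coe_iff_of_mem_Ico (a := 0) (by simpa using hs hr) (by simpa using ht)]
    at hrt
  exact hrt ▸ hr

theorem coe_mem_arcIoc_iff (ha1 : a < 1) {t : ℝ} (ht : t ∈ Ico 0 1) :
    (t : AddCircle (1 : ℝ)) ∈ arcIoc a ↔ t ∈ Ioc 0 a :=
  coe_mem_image_iff_of_subset_Ico (fun _ h => ⟨h.1.le, h.2.trans_lt ha1⟩) ht

theorem zero_notMem_arcIoc (ha1 : a < 1) : (0 : AddCircle (1 : ℝ)) ∉ arcIoc a := by
  simpa using (coe_mem_arcIoc_iff ha1 (t := 0) ⟨le_rfl, one_pos⟩).not.2 (by simp)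

theorem exists_mem_Ico_coe_eq (z : AddCircle (1 : ℝ)) :
    ∃ r ∈ Ico (0 : ℝ) 1, (r : AddCircle (1 : ℝ)) = z :=
  ⟨AddCircle.equivIco 1 0 z, by simpa using (AddCircle.equivIco 1 0 z).2,
    AddCircle.coe_equivIco⟩

theorem exists_mem_Ioc_coe_eq (z : AddCircle (1 : ℝ)) :
    ∃ r ∈ Ioc (0 : ℝ) 1, (r : AddCircle (1 : ℝ)) = z :=
  ⟨AddCircle.equivIoc 1 0 z, by simpa using (AddCircle.equivIoc 1 0 z).2,
    AddCircle.coe_equivIoc⟩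

theorem injOn_coe_Ioc : InjOn ((↑) : ℝ → AddCircle (1 : ℝ)) (Ioc 0 1) := fun s hs t ht h =>
  (AddCircle.coe_eq_coe_iff_of_mem_Ioc (a := 0) (by simpa using hs) (by simpa using ht)).1 h

theorem measurableSet_arcIoc (ha1 : a < 1) : MeasurableSet (arcIoc a) :=
  measurableSet_Ioc.image_of_continuousOn_injOn (by fun_prop)
    (injOn_coe_Ioc.mono (Ioc_subset_Ioc_right ha1.le))

theorem volume_arcIoc (ha1 : a < 1) : volume (arcIoc a) = ENNReal.ofReal a := by
  have hmk := AddCircle.measurePreserving_mk 1 0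
  rw [zero_add] at hmk
  rw [← hmk.measure_preimage (measurableSet_arcIoc ha1).nullMeasurableSet,
    Measure.restrict_apply' measurableSet_Ioc, arcIoc,
    injOn_coe_Ioc.preimage_image_inter (Ioc_subset_Ioc_right ha1.le), Real.volume_Ioc, sub_zero]

theorem volume_eq_volume_coe_preimage_inter_pi_Ioc {ι : Type*} [Fintype ι]
    {E : Set (ι → AddCircle (1 : ℝ))} (hE : MeasurableSet E) :
    volume E = volume ({y : ι → ℝ | (fun j => (y j : AddCircle (1 : ℝ))) ∈ E} ∩
      univ.pi fun _ => Ioc 0 1) := by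
  have hmk : MeasurePreserving (fun (y : ι → ℝ) j => (y j : AddCircle (1 : ℝ)))
      (Measure.pi fun _ => volume.restrict (Ioc 0 1)) volume :=
    measurePreserving_pi _ _ fun _ => by simpa using AddCircle.measurePreserving_mk 1 0
  rw [← hmk.measure_preimage hE.nullMeasurableSet, ← Measure.restrict_pi_pi,
    Measure.restrict_apply' (.univ_pi fun _ => measurableSet_Ioc)]
  rfl

theorem coe_sub_coe_mem_arcIoc_iff (ha : 0 ≤ a) (ha1 : a < 1) {s t : ℝ}
    (hs : s ∈ Ioo a (1 - a)) (ht : t ∈ Ioo a (1 - a)) :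
    (t : AddCircle (1 : ℝ)) - s ∈ arcIoc a ↔ t ∈ Ioc s (s + a) := by
  rcases le_or_gt s t with hst | hst
  · rw [← AddCircle.coe_sub,
      coe_mem_arcIoc_iff ha1 ⟨sub_nonneg.2 hst, by linarith [ht.2, hs.1]⟩]
    simp only [mem_Ioc, sub_pos, sub_le_iff_le_add']
  · have : (t : AddCircle (1 : ℝ)) - s = ((t - s + 1 : ℝ) : AddCircle (1 : ℝ)) := by
      rw [AddCircle.coe_add, AddCircle.coe_sub, AddCircle.coe_period, add_zero]
    rw [this, coe_mem_arcIoc_iff ha1 ⟨by linarith [ht.1, hs.2], by linarith⟩]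
    simp only [mem_Ioc]
    constructor <;> rintro ⟨h₁, h₂⟩ <;> linarith [ht.1, hs.2]

theorem covers_iff_forall_exists_sub_mem_arcIoc {ι : Type*} [Finite ι] [Nonempty ι]
    (ha : 0 ≤ a) (ha1 : a < 1) (x : ι → AddCircle (1 : ℝ)) :
    (∀ y : AddCircle (1 : ℝ), ∃ i, ∃ t ∈ Icc (0 : ℝ) a,
        y = x i + (t : AddCircle (1 : ℝ))) ↔
      ∀ i, ∃ j, x j - x i ∈ arcIoc a := by
  have hIcc : Icc 0 a ⊆ Ico (0 : ℝ) 1 := fun _ h => ⟨h.1, h.2.trans_lt ha1⟩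
  have himage (y : AddCircle (1 : ℝ)) (i) :
      (∃ t ∈ Icc (0 : ℝ) a, y = x i + (t : AddCircle (1 : ℝ))) ↔
        y - x i ∈ ((↑) : ℝ → AddCircle (1 : ℝ)) '' Icc 0 a := by
    simp only [mem_image, eq_comm (b := y - x i), sub_eq_iff_eq_add']
  simp only [himage]
  constructor
  -- Otherwise the point halfway between `x i + a` and the next endpoint after `x i` is uncovered.
  · intro hcov i
    by_contra! hno
    choose g hg hgx using fun j => exists_mem_Ioc_coe_eq (x j - x i)
    have hga (j) : a < g j := not_le.1 fun hle => hno j ⟨g j, ⟨(hg j).1, hle⟩, hgx j⟩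
    obtain ⟨j₀, hj₀⟩ := Finite.exists_min g
    obtain ⟨j, hj⟩ := hcov (x i + ((a + g j₀) / 2 : ℝ))
    have hmem : (a + g j₀) / 2 - g j + 1 ∈ Ico (0 : ℝ) 1 := by
      constructor <;> linarith [hga j₀, hj₀ j, (hg j).2]
    have : x i + (((a + g j₀) / 2 : ℝ) : AddCircle (1 : ℝ)) - x j =
        ((a + g j₀) / 2 - g j + 1 : ℝ) := by
      rw [AddCircle.coe_add, AddCircle.coe_sub, hgx, AddCircle.coe_period]
      abel
    rw [this, coe_mem_image_iff_of_subset_Ico hIcc hmem] at hj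
    linarith [hj.2, hga j₀, (hg j).2]
  -- The last endpoint `x i` before `y` covers it: a successor of `x i` within `a` would lie
  -- between `x i` and `y`.
  · intro h y
    choose r hr hry using fun j => exists_mem_Ico_coe_eq (y - x j)
    obtain ⟨i, hi⟩ := Finite.exists_min r
    refine ⟨i, ?_⟩
    rw [← hry i, coe_mem_image_iff_of_subset_Ico hIcc (hr i)]
    by_contra hri
    have hri : a < r i := by simpa [(hr i).1] using hri
    obtain ⟨j, δ, hδ, hδx⟩ := h i
    have hmem : r i - δ ∈ Ico (0 : ℝ) 1 := by
      constructor <;> linarith [hδ.1, hδ.2, (hr i).2]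
    have : r j = r i - δ := by
      refine (AddCircle.coe_eq_coe_iff_of_mem_Ico (a := 0) (by simpa using hr j)
        (by simpa using hmem)).1 ?_
      rw [AddCircle.coe_sub, hry, hry, hδx]
      abel
    linarith [hi j, hδ.1]

def longGapAfter {ι : Type*} (a : ℝ) (i : ι) : Set (ι → AddCircle (1 : ℝ)) :=
  {x | ∀ j, x j - x i ∉ arcIoc a}

theorem measurableSet_longGapAfter {ι : Type*} [Countable ι] (ha1 : a < 1) (i : ι) :
    MeasurableSet (longGapAfter a i) := by
  simp only [longGapAfter, ofPred_forall]
  exact .iInter fun j => (measurableSet_arcIoc ha1).compl.preimage (by fun_prop)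

theorem cons_zero_mem_iInter_longGapAfter_iff (ha : 0 ≤ a) (ha1 : a < 1) {L : ℕ}
    {y : Fin L → ℝ} (hy : ∀ j, y j ∈ Ioo 0 1) :
    (Fin.cons 0 fun j => (y j : AddCircle (1 : ℝ))) ∈ ⋂ i, longGapAfter a i ↔
      y ∈ separatedIoo a a (1 - a) L := by
  have hpos (j) : (y j : AddCircle (1 : ℝ)) ∈ arcIoc a ↔ y j ≤ a := by
    rw [coe_mem_arcIoc_iff ha1 ⟨(hy j).1.le, (hy j).2⟩]
    simp [(hy j).1]
  have hneg (j) : -(y j : AddCircle (1 : ℝ)) ∈ arcIoc a ↔ 1 - a ≤ y j := by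
    have : -(y j : AddCircle (1 : ℝ)) = ((1 - y j : ℝ) : AddCircle (1 : ℝ)) := by
      rw [AddCircle.coe_sub, AddCircle.coe_period, zero_sub]
    rw [this, coe_mem_arcIoc_iff ha1 ⟨by linarith [(hy j).2], by linarith [(hy j).1]⟩]
    simp only [mem_Ioc]
    constructor
    · intro h; linarith [h.2]
    · intro h; constructor <;> linarith [(hy j).2]
  simp only [mem_iInter, longGapAfter, mem_ofPred_eq, Fin.forall_fin_succ, Fin.cons_zero,
    Fin.cons_succ, sub_zero, zero_sub, neg_zero, separatedIoo]
  constructor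
  · rintro ⟨⟨-, hlo⟩, hrest⟩
    have hIoo (i) : y i ∈ Ioo a (1 - a) :=
      ⟨not_le.1 ((hpos i).not.1 (hlo i)), not_le.1 ((hneg i).not.1 (hrest i).1)⟩
    exact ⟨hIoo, fun i j =>
      (coe_sub_coe_mem_arcIoc_iff ha ha1 (hIoo i) (hIoo j)).not.1 ((hrest i).2 j)⟩
  · rintro ⟨hIoo, hgap⟩
    exact ⟨⟨zero_notMem_arcIoc ha1, fun j => (hpos j).not.2 (not_le.2 (hIoo j).1)⟩,
      fun i => ⟨(hneg i).not.2 (not_le.2 (hIoo i).2),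
        fun j => (coe_sub_coe_mem_arcIoc_iff ha ha1 (hIoo i) (hIoo j)).not.2 (hgap i j)⟩⟩

theorem volume_iInter_longGapAfter_fin (ha : 0 ≤ a) (ha1 : a < 1) (L : ℕ) :
    volume (⋂ i : Fin (L + 1), longGapAfter a i) = ENNReal.ofReal (1 - (L + 1) * a) ^ L := by
  have hmeas : MeasurableSet (⋂ i : Fin (L + 1), longGapAfter a i) :=
    .iInter fun i => measurableSet_longGapAfter ha1 i
  have hinv (x : Fin (L + 1) → AddCircle (1 : ℝ)) (c) :
      (fun i => x i + c) ∈ ⋂ i, longGapAfter a i ↔ x ∈ ⋂ i, longGapAfter a i := by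
    simp [longGapAfter]
  -- A coordinate equal to `1` puts a point onto the pinned point `0`; this is a null event.
  have hae : ({y : Fin L → ℝ | (Fin.cons 0 fun j => (y j : AddCircle (1 : ℝ))) ∈
      ⋂ i, longGapAfter a i} ∩ univ.pi (fun _ => Ioc 0 1) : Set (Fin L → ℝ)) =ᵐ[volume]
        separatedIoo a a (1 - a) L := by
    refine Filter.eventuallyEq_set.2 ?_
    filter_upwards [ae_all_iff.2 fun j => Measure.ae_eval_ne (fun _ : Fin L => volume) j 1]
      with y hy
    constructor
    · rintro ⟨h, hy01⟩
      exact (cons_zero_mem_iInter_longGapAfter_iff ha ha1 fun j =>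
        ⟨(hy01 j trivial).1, (hy01 j trivial).2.lt_of_ne (hy j)⟩).1 h
    · intro h
      have hy01 (j) : y j ∈ Ioo 0 1 :=
        ⟨ha.trans_lt (h.1 j).1, (h.1 j).2.trans_le (by linarith)⟩
      exact ⟨(cons_zero_mem_iInter_longGapAfter_iff ha ha1 hy01).2 h,
        fun j _ => Ioo_subset_Ioc_self (hy01 j)⟩
  have hslice : MeasurableSet
      {w : Fin L → AddCircle (1 : ℝ) | Fin.cons 0 w ∈ ⋂ i, longGapAfter a i} :=
    hmeas.preimage (measurable_finCons 0)
  rw [volume_pi, measure_pi_eq_measure_cons_zero volume hmeas hinv, ← volume_pi,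
    volume_eq_volume_coe_preimage_inter_pi_Ioc hslice]
  refine (measure_congr hae).trans ?_
  rw [volume_separatedIoo ha]
  ring_nf

theorem volume_iInter_longGapAfter {κ : Type*} [Fintype κ] [Nonempty κ] (ha : 0 ≤ a)
    (ha1 : a < 1) :
    volume (⋂ i : κ, longGapAfter a i) =
      ENNReal.ofReal (1 - Fintype.card κ * a) ^ (Fintype.card κ - 1) := by
  obtain ⟨L, hL⟩ := Nat.exists_eq_succ_of_ne_zero (Fintype.card_ne_zero (α := κ))
  let e := (Fintype.equivFinOfCardEq hL).symm
  have hpre :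
      MeasurableEquiv.piCongrLeft (fun _ => AddCircle (1 : ℝ)) e ⁻¹' ⋂ i, longGapAfter a i =
      ⋂ i : Fin (L + 1), longGapAfter a i := by
    ext y
    simp [longGapAfter, ← e.forall_congr_right, MeasurableEquiv.coe_piCongrLeft,
      Equiv.piCongrLeft_apply_apply]
  rw [← (volume_measurePreserving_piCongrLeft (fun _ => AddCircle (1 : ℝ)) e).measure_preimage
    (MeasurableSet.iInter fun i => measurableSet_longGapAfter ha1 i).nullMeasurableSet, hpre,
    volume_iInter_longGapAfter_fin ha ha1, hL]
  push_cast
  rfl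

theorem volume_setOf_forall_sub_notMem_arcIoc {κ : Type*} [Fintype κ] (ha : 0 ≤ a) (ha1 : a < 1)
    {u : κ → AddCircle (1 : ℝ)} (hu : u ∈ ⋂ i, longGapAfter a i) (hinj : Injective u) :
    volume {z | ∀ i, z - u i ∉ arcIoc a} = ENNReal.ofReal (1 - Fintype.card κ * a) := by
  simp only [mem_iInter, longGapAfter, mem_ofPred_eq] at hu
  have hset : {z | ∀ i, z - u i ∉ arcIoc a} = (⋃ i, (· - u i) ⁻¹' arcIoc a)ᶜ := by
    ext z; simp
  have hmeas (i) : MeasurableSet ((· - u i) ⁻¹' arcIoc a) :=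
    (measurableSet_arcIoc ha1).preimage (measurable_sub_const _)
  have hdisj : Pairwise (Disjoint on fun i => (· - u i) ⁻¹' arcIoc a) := by
    intro i j hij
    refine disjoint_left.2 fun z ⟨s, hs, hsz⟩ ⟨t, ht, htz⟩ => ?_
    dsimp only at hsz htz
    rcases lt_trichotomy s t with hst | rfl | hst
    · refine hu j i ⟨t - s, ⟨by linarith, by linarith [hs.1, ht.2]⟩, ?_⟩
      rw [AddCircle.coe_sub, hsz, htz]
      abel
    · exact hij (hinj (sub_right_injective (hsz.symm.trans htz)))
    · refine hu i j ⟨s - t, ⟨by linarith, by linarith [ht.1, hs.2]⟩, ?_⟩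
      rw [AddCircle.coe_sub, hsz, htz]
      abel
  rw [hset, prob_compl_eq_one_sub (.iUnion hmeas), measure_iUnion hdisj hmeas, tsum_fintype]
  simp only [(measurePreserving_sub_right volume _).measure_preimage
    (measurableSet_arcIoc ha1).nullMeasurableSet, volume_arcIoc ha1, Finset.sum_const,
    Finset.card_univ, nsmul_eq_mul]
  rw [ENNReal.ofReal_sub _ (by positivity), ENNReal.ofReal_one, ENNReal.ofReal_mul (by positivity),
    ENNReal.ofReal_natCast]

theorem volume_prod_iInter_longGapAfter_avoiding {κ κ' : Type*} [Fintype κ] [Fintype κ']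
    (ha : 0 ≤ a) (ha1 : a < 1) :
    ((Measure.pi fun _ : κ => volume).prod (Measure.pi fun _ : κ' => volume))
        {q : (κ → AddCircle (1 : ℝ)) × (κ' → AddCircle (1 : ℝ)) |
          q.1 ∈ ⋂ i, longGapAfter a i ∧ ∀ r i, q.2 r - q.1 i ∉ arcIoc a} =
      ENNReal.ofReal (1 - Fintype.card κ * a) ^ Fintype.card κ' *
        volume (⋂ i : κ, longGapAfter a i) := by
  set P := {q : (κ → AddCircle (1 : ℝ)) × (κ' → AddCircle (1 : ℝ)) |
    q.1 ∈ ⋂ i, longGapAfter a i ∧ ∀ r i, q.2 r - q.1 i ∉ arcIoc a}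
  have hGood : MeasurableSet (⋂ i : κ, longGapAfter a i) :=
    .iInter fun i => measurableSet_longGapAfter ha1 i
  have hP : MeasurableSet P := by
    have : P = Prod.fst ⁻¹' (⋂ i : κ, longGapAfter a i) ∩
        ⋂ r, ⋂ i, (fun q : (κ → AddCircle (1 : ℝ)) × (κ' → AddCircle (1 : ℝ)) =>
          q.2 r - q.1 i) ⁻¹' (arcIoc a)ᶜ := by
      ext q; simp [P]
    rw [this]
    exact (hGood.preimage measurable_fst).inter
      (.iInter fun r => .iInter fun i => (measurableSet_arcIoc ha1).compl.preimage (by fun_prop))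
  have hslice : ∀ᵐ u ∂Measure.pi fun _ : κ => volume,
      Measure.pi (fun _ => volume) (Prod.mk u ⁻¹' P) = (⋂ i, longGapAfter a i).indicator
        (fun _ => ENNReal.ofReal (1 - Fintype.card κ * a) ^ Fintype.card κ') u := by
    filter_upwards [ae_injective_pi volume] with u hu
    by_cases hg : u ∈ ⋂ i, longGapAfter a i
    · have : Prod.mk u ⁻¹' P = univ.pi fun _ => {z | ∀ i, z - u i ∉ arcIoc a} := by
        ext v
        simp only [P, mem_preimage, mem_ofPred_eq, mem_pi, mem_univ, true_implies]
        exact and_iff_right hg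
      rw [indicator_of_mem hg, this, Measure.pi_pi, Finset.prod_const, Finset.card_univ,
        volume_setOf_forall_sub_notMem_arcIoc ha ha1 hg hu]
    · have : Prod.mk u ⁻¹' P = ∅ := eq_empty_of_forall_notMem fun v hv => hg hv.1
      rw [indicator_of_notMem hg, this, measure_empty]
  rw [Measure.prod_apply hP, lintegral_congr_ae hslice, lintegral_indicator_const hGood]
  rfl

theorem volume_biInter_longGapAfter {ι : Type*} [Fintype ι] (ha : 0 ≤ a) (ha1 : a < 1)
    (T : Finset ι) :
    volume (⋂ i ∈ T, longGapAfter a i) =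
      ENNReal.ofReal (1 - T.card * a) ^ (Fintype.card ι - 1) := by
  classical
  rcases T.eq_empty_or_nonempty with rfl | hT
  · simp
  have : Nonempty T := hT.to_subtype
  have hsplit : ⋂ i ∈ T, longGapAfter a i =
      MeasurableEquiv.piEquivPiSubtypeProd (fun _ => AddCircle (1 : ℝ)) (· ∈ T) ⁻¹'
        {q | q.1 ∈ ⋂ i, longGapAfter a i ∧ ∀ r i, q.2 r - q.1 i ∉ arcIoc a} := by
    ext x
    simp only [longGapAfter, mem_iInter, mem_preimage, mem_ofPred_eq,
      MeasurableEquiv.piEquivPiSubtypeProd_apply]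
    refine ⟨fun h => ⟨fun i j => h i i.2 j, fun r i => h i i.2 r⟩,
      fun ⟨hT, hTc⟩ i hi j => ?_⟩
    by_cases hj : j ∈ T
    · exact hT ⟨i, hi⟩ ⟨j, hj⟩
    · exact hTc ⟨j, hj⟩ ⟨i, hi⟩
  rw [hsplit, volume_pi,
    (measurePreserving_piEquivPiSubtypeProd (fun _ => volume) _).measure_preimage_equiv]
  -- `piEquivPiSubtypeProd` carries its own `Fintype` instance on the subtype `T`.
  rw [Subsingleton.elim (Subtype.fintype (· ∈ T)) (Finset.Subtype.fintype T),
    volume_prod_iInter_longGapAfter_avoiding ha ha1, volume_iInter_longGapAfter ha ha1,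
    Fintype.card_coe, ← pow_add, Fintype.card_subtype_compl, Fintype.card_coe]
  congr 1
  have := T.card_le_univ
  have := hT.card_pos
  omega

end Circle

theorem sum_powerset_eq_sum_range_floor {k : ℕ} (hk : 1 ≤ k) {a : ℝ} (ha : 0 < a)
    (ha1 : a < 1) :
    ∑ u ∈ (Finset.univ : Finset (Fin k)).powerset,
        (-1 : ℝ) ^ u.card * max (1 - u.card * a) 0 ^ (k - 1) =
      ∑ l ∈ Finset.range (⌊1 / a⌋₊ + 1),
        (-1 : ℝ) ^ l * k.choose l * (1 - l * a) ^ (k - 1) := by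
  set F := ⌊1 / a⌋₊
  have hF : 1 ≤ F := Nat.le_floor (by rw [Nat.cast_one, le_div_iff₀ ha]; linarith)
  let f (l : ℕ) : ℝ := (-1) ^ l * k.choose l * max (1 - l * a) 0 ^ (k - 1)
  -- Beyond `k` the binomial coefficient vanishes, beyond `F` the positive part (then `k ≥ 2`).
  have hf : ∀ l ≥ min (k + 1) (F + 1), f l = 0 := by
    intro l hl
    rcases lt_or_ge k l with hkl | hlk
    · simp [f, Nat.choose_eq_zero_of_lt hkl]
    · have hFl : (F : ℝ) + 1 ≤ l := by
        have := min_le_iff.1 hl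
        exact_mod_cast (show F + 1 ≤ l by omega)
      have : 1 < (l : ℝ) * a := by
        have := Nat.lt_floor_add_one (1 / a)
        rw [div_lt_iff₀ ha] at this
        nlinarith
      have hk1 : k - 1 ≠ 0 := by omega
      simp [f, max_eq_right (by linarith : 1 - (l : ℝ) * a ≤ 0), zero_pow hk1]
  calc _ = ∑ l ∈ Finset.range (k + 1), f l := by
        rw [Finset.sum_powerset_apply_card (fun l => (-1 : ℝ) ^ l * max (1 - l * a) 0 ^ (k - 1))]
        simp [f, mul_assoc, mul_left_comm]
    _ = ∑ l ∈ Finset.range (F + 1), f l := by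
        rw [Finset.eventually_constant_sum hf (min_le_left _ _),
          Finset.eventually_constant_sum hf (min_le_right _ _)]
    _ = _ := by
        refine Finset.sum_congr rfl fun l hl => ?_
        have : (l : ℝ) * a ≤ 1 := by
          have hlF : (l : ℝ) ≤ 1 / a :=
            (Nat.cast_le.2 (Nat.lt_succ_iff.1 (Finset.mem_range.1 hl))).trans
              (Nat.floor_le (by positivity))
          rwa [le_div_iff₀ ha] at hlF
        simp [f, max_eq_left (by linarith : 0 ≤ 1 - (l : ℝ) * a)]

/-- Stevens' theorem: if `k` arcs of fixed length `a ∈ (0,1)` have their left endpoints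
sampled i.i.d. uniformly on the circle `ℝ/ℤ` of circumference 1, then the probability that
the arcs cover the circle equals `Σ_{l=0}^{⌊1/a⌋} (-1)^l C(k,l) (1-la)^(k-1)`. -/
theorem stmt7 (k : ℕ) (hk : 1 ≤ k) (a : ℝ) (ha : 0 < a) (ha1 : a < 1) :
    (Measure.pi fun _ : Fin k => (volume : Measure (AddCircle (1:ℝ))))
      {x : Fin k → AddCircle (1:ℝ) |
        ∀ y : AddCircle (1:ℝ), ∃ i : Fin k, ∃ t ∈ Set.Icc (0:ℝ) a, y = x i + (t : AddCircle (1:ℝ))}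
    = ENNReal.ofReal
        (∑ l ∈ Finset.range (⌊1 / a⌋₊ + 1),
          (-1 : ℝ) ^ l * (k.choose l : ℝ) * (1 - l * a) ^ (k - 1)) := by
  have : Nonempty (Fin k) := ⟨⟨0, hk⟩⟩
  have hcover : {x : Fin k → AddCircle (1 : ℝ) | ∀ y : AddCircle (1 : ℝ), ∃ i : Fin k,
      ∃ t ∈ Icc (0 : ℝ) a, y = x i + (t : AddCircle (1 : ℝ))} =
        ⋂ i ∈ (Finset.univ : Finset (Fin k)), (longGapAfter a i)ᶜ := by
    ext x
    rw [mem_ofPred_eq, covers_iff_forall_exists_sub_mem_arcIoc ha.le ha1]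
    simp [longGapAfter]
  rw [hcover, ← volume_pi, ← ofReal_measureReal, measureReal_biInter_compl_eq_sum_powerset _
    fun i _ => measurableSet_longGapAfter ha1 i, ← sum_powerset_eq_sum_range_floor hk ha ha1]
  refine congrArg ENNReal.ofReal (Finset.sum_congr rfl fun u _ => ?_)
  rw [measureReal_def, volume_biInter_longGapAfter ha.le ha1, ENNReal.toReal_pow,
    ENNReal.toReal_ofReal', Fintype.card_fin]
end

section
/- For i.i.d. uniform samples X_n of size n from the circle of circumference 1, the expected Euler characteristic of the Čech complex satisfies E[χ(Čech(X_n, r))] = 1 + Σ_{k=1}^{n} (−1)^k C(n,k) Q_k(1/2 − r), where Q_k(s) is the probability that open arcs of radius s centered at k i.i.d. uniform points cover the circle. -/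
/-!
The Euler characteristic of the nerve is the alternating sum, over nonempty index sets `σ`, of
the indicator that the closed arcs of radius `r` around the points `x i`, `i ∈ σ`, share a point.
On the circle of circumference `1` a point `c` lies within `r` of every `x i` iff its antipode
`c + 1/2` lies at distance at least `1/2 - r` from every `x i`, i.e. is not covered by the open
arcs of radius `1/2 - r`. Since `(x i)_{i ∈ σ}` is again an i.i.d. uniform sample, that event has
probability `1 - Q_{|σ|}(1/2 - r)`. Grouping the `σ` by cardinality and using
`∑_{k=1}^n (-1)^k C(n,k) = -1` gives the formula.
-/

open MeasureTheory
open scoped Classical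

/-- The Euler characteristic of the Čech complex (nerve of closed arcs of radius `s`
centered at the points `x i`) of a finite point configuration on the circle `ℝ/ℤ`. -/
noncomputable def cechEuler {n : ℕ} (x : Fin n → AddCircle (1:ℝ)) (s : ℝ) : ℝ :=
  ∑ σ ∈ Finset.univ.powerset.filter (fun σ : Finset (Fin n) => σ.Nonempty),
    if ∃ c : AddCircle (1:ℝ), ∀ i ∈ σ, dist c (x i) ≤ s then (-1 : ℝ) ^ (σ.card - 1) else 0

/-- `coverProb k s` is the probability that open arcs of radius `s` centered at `k`
i.i.d. uniform points cover the circle `ℝ/ℤ` of circumference 1. -/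
noncomputable def coverProb (k : ℕ) (s : ℝ) : ℝ :=
  ((Measure.pi fun _ : Fin k => (volume : Measure (AddCircle (1:ℝ))))
    {x : Fin k → AddCircle (1:ℝ) | ∀ y : AddCircle (1:ℝ), ∃ i, dist y (x i) < s}).toReal

open Finset

theorem Finset.sum_powerset_filter_nonempty_apply_card {α M : Type*} [AddCommMonoid M]
    (f : ℕ → M) (s : Finset α) :
    ∑ t ∈ s.powerset.filter (fun t => t.Nonempty), f t.card
      = ∑ k ∈ Icc 1 s.card, s.card.choose k • f k := by
  calc ∑ t ∈ s.powerset.filter (fun t => t.Nonempty), f t.card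
      = ∑ t ∈ s.powerset, if t.card ≠ 0 then f t.card else 0 := by
        simp only [sum_filter, card_ne_zero]
    _ = ∑ k ∈ range (s.card + 1), s.card.choose k • if k ≠ 0 then f k else 0 :=
        sum_powerset_apply_card (fun k => if k ≠ 0 then f k else 0)
    _ = ∑ k ∈ (range (s.card + 1)).filter (· ≠ 0), s.card.choose k • f k := by
        simp only [sum_filter, smul_ite, smul_zero]
    _ = ∑ k ∈ Icc 1 s.card, s.card.choose k • f k := by
        congr 1
        ext k
        simp only [mem_filter, mem_range, mem_Icc]
        omega

theorem sum_Icc_neg_one_pow_mul_choose {R : Type*} [CommRing R] {n : ℕ} (hn : n ≠ 0) :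
    ∑ k ∈ Icc 1 n, (-1 : R) ^ k * n.choose k = -1 := by
  have h := congrArg (Int.cast : ℤ → R) (Int.alternating_sum_range_choose_of_ne hn)
  push_cast at h
  rw [range_eq_Ico, sum_eq_sum_Ico_succ_bot (by omega), zero_add, Ico_add_one_right_eq_Icc] at h
  simp only [pow_zero, Nat.choose_zero_right, Nat.cast_one, mul_one] at h
  linear_combination h

theorem sum_Icc_choose_smul_neg_one_pow_pred_mul_one_sub {R : Type*} [CommRing R] {n : ℕ}
    (hn : n ≠ 0) (q : ℕ → R) :
    ∑ k ∈ Icc 1 n, n.choose k • ((-1) ^ (k - 1) * (1 - q k))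
      = 1 + ∑ k ∈ Icc 1 n, (-1) ^ k * (n.choose k : R) * q k := by
  have hterm : ∀ k ∈ Icc 1 n, n.choose k • ((-1 : R) ^ (k - 1) * (1 - q k))
      = -((-1) ^ k * n.choose k) + (-1) ^ k * (n.choose k : R) * q k := by
    intro k hk
    obtain ⟨j, rfl⟩ := Nat.exists_eq_add_of_le' (mem_Icc.mp hk).1
    rw [nsmul_eq_mul, Nat.add_sub_cancel, pow_succ]
    ring
  rw [sum_congr rfl hterm, sum_add_distrib, sum_neg_distrib, sum_Icc_neg_one_pow_mul_choose hn,
    neg_neg]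

namespace AddCircle

variable {p : ℝ} [hp : Fact (0 < p)]

theorem norm_add_half_period (z : AddCircle p) : ‖z + ↑(p / 2)‖ = p / 2 - ‖z‖ := by
  obtain ⟨⟨t, ht⟩, rfl⟩ := (equivIco p (-(p / 2))).symm.surjective z
  obtain ⟨ht₁, ht₂⟩ := ht
  have hp' : |p| = p := abs_of_pos hp.out
  have norm_coe {s : ℝ} (hs : |s| ≤ p / 2) : ‖(s : AddCircle p)‖ = |s| :=
    (norm_coe_eq_abs_iff p hp.out.ne').mpr (by rwa [hp'])
  change ‖(t : AddCircle p) + ↑(p / 2)‖ = p / 2 - ‖(t : AddCircle p)‖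
  rw [norm_coe (abs_le.mpr ⟨by linarith, by linarith⟩), ← coe_add]
  rcases lt_or_ge t 0 with h | h
  · rw [norm_coe (abs_le.mpr ⟨by linarith, by linarith⟩), abs_of_neg h,
      abs_of_nonneg (by linarith)]
    ring
  · rw [show t + p / 2 = t - p / 2 + p by ring, coe_add, coe_period, add_zero,
      norm_coe (abs_le.mpr ⟨by linarith, by linarith⟩), abs_of_nonneg h,
      abs_of_nonpos (by linarith)]
    ring

theorem dist_add_half_period (c x : AddCircle p) :
    dist (c + ↑(p / 2)) x = p / 2 - dist c x := by
  rw [dist_eq_norm, dist_eq_norm, add_sub_right_comm, norm_add_half_period]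

theorem exists_forall_dist_le_iff_not_forall_exists_dist_lt {ι : Type*}
    (x : ι → AddCircle p) (r : ℝ) :
    (∃ c, ∀ i, dist c (x i) ≤ r) ↔ ¬∀ y, ∃ i, dist y (x i) < p / 2 - r := by
  push Not
  constructor <;> rintro ⟨c, hc⟩ <;>
    exact ⟨c + ↑(p / 2), fun i => by rw [dist_add_half_period]; linarith [hc i]⟩

end AddCircle

theorem isClosed_setOf_exists_forall_mem_dist_le {X ι : Type*} [PseudoMetricSpace X]
    [CompactSpace X] (s : Set ι) (r : ℝ) :
    IsClosed {x : ι → X | ∃ c, ∀ i ∈ s, dist c (x i) ≤ r} := by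
  have hclosed : IsClosed {q : X × (ι → X) | ∀ i ∈ s, dist q.1 (q.2 i) ≤ r} := by
    simp only [Set.ofPred_forall]
    exact isClosed_biInter fun i _ =>
      isClosed_le (continuous_fst.dist ((continuous_apply i).comp continuous_snd))
        continuous_const
  convert isClosedMap_snd_of_compactSpace _ hclosed using 1
  ext x
  simp

theorem MeasureTheory.measurePreserving_pi_comp_of_injective {X ι κ : Type*} [MeasurableSpace X]
    [Fintype ι] [Fintype κ] (μ : Measure X) [IsProbabilityMeasure μ] {e : ι → κ}
    (he : Function.Injective e) :
    MeasurePreserving (fun x : κ → X => x ∘ e) (Measure.pi fun _ => μ)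
      (Measure.pi fun _ => μ) := by
  have hmeas : Measurable fun x : κ → X => x ∘ e :=
    measurable_pi_lambda _ fun i => measurable_pi_apply (e i)
  refine ⟨hmeas, (Measure.pi_eq fun s hs => ?_).symm⟩
  have hpre : (fun x : κ → X => x ∘ e) ⁻¹' Set.univ.pi s
      = Set.univ.pi (Function.extend e s fun _ => Set.univ) := by
    ext x
    simp only [Set.mem_preimage, Set.mem_univ_pi, Function.comp_apply]
    refine ⟨fun h j => ?_, fun h i => by simpa only [he.extend_apply] using h (e i)⟩
    by_cases hj : ∃ i, e i = j
    · obtain ⟨i, rfl⟩ := hj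
      rw [he.extend_apply]
      exact h i
    · rw [Function.extend_apply' _ _ _ hj]
      trivial
  rw [Measure.map_apply hmeas (.univ_pi hs), hpre, Measure.pi_pi]
  refine (Fintype.prod_of_injective e he _ _ (fun j hj => ?_) fun i => ?_).symm
  · rw [Function.extend_apply' _ _ _ hj, measure_univ]
  · rw [he.extend_apply]

instance : IsProbabilityMeasure (volume : Measure UnitAddCircle) := ⟨UnitAddCircle.measure_univ⟩

theorem measureReal_exists_forall_dist_le (k : ℕ) (r : ℝ) :
    (Measure.pi fun _ : Fin k => (volume : Measure UnitAddCircle)).real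
      {y | ∃ c, ∀ j, dist c (y j) ≤ r} = 1 - coverProb k (1 / 2 - r) := by
  have hcompl : {y : Fin k → UnitAddCircle | ∃ c, ∀ j, dist c (y j) ≤ r}
      = {y | ∀ z, ∃ j, dist z (y j) < 1 / 2 - r}ᶜ := by
    ext y
    exact AddCircle.exists_forall_dist_le_iff_not_forall_exists_dist_lt y r
  have hmeas :
      MeasurableSet {y : Fin k → UnitAddCircle | ∀ z, ∃ j, dist z (y j) < 1 / 2 - r} := by
    rw [← MeasurableSet.compl_iff, ← hcompl]
    simpa using (isClosed_setOf_exists_forall_mem_dist_le Set.univ r).measurableSet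
  rw [hcompl, measureReal_compl hmeas, probReal_univ]
  rfl

theorem measureReal_exists_forall_mem_dist_le {n : ℕ} (σ : Finset (Fin n)) (r : ℝ) :
    (Measure.pi fun _ : Fin n => (volume : Measure UnitAddCircle)).real
      {x | ∃ c, ∀ i ∈ σ, dist c (x i) ≤ r} = 1 - coverProb σ.card (1 / 2 - r) := by
  let e := σ.orderEmbOfFin rfl
  have hpre : {x : Fin n → UnitAddCircle | ∃ c, ∀ i ∈ σ, dist c (x i) ≤ r}
      = (fun x => x ∘ e) ⁻¹' {y | ∃ c, ∀ j, dist c (y j) ≤ r} := by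
    ext x
    simp only [Set.mem_preimage, Set.mem_ofPred_eq, Function.comp_apply, ← mem_coe,
      ← range_orderEmbOfFin σ rfl, Set.forall_mem_range]
    rfl
  have hmeas :
      MeasurableSet {y : Fin σ.card → UnitAddCircle | ∃ c, ∀ j, dist c (y j) ≤ r} := by
    simpa using (isClosed_setOf_exists_forall_mem_dist_le Set.univ r).measurableSet
  rw [hpre, (measurePreserving_pi_comp_of_injective _ e.injective).measureReal_preimage
    hmeas.nullMeasurableSet, measureReal_exists_forall_dist_le]

theorem integral_cechEuler (n : ℕ) (r : ℝ) :
    ∫ x, cechEuler x r ∂(Measure.pi fun _ : Fin n => (volume : Measure UnitAddCircle)) =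
      ∑ σ ∈ univ.powerset.filter (fun σ : Finset (Fin n) => σ.Nonempty),
        (-1 : ℝ) ^ (σ.card - 1) * (1 - coverProb σ.card (1 / 2 - r)) := by
  have hmeas (σ : Finset (Fin n)) :
      MeasurableSet {x : Fin n → UnitAddCircle | ∃ c, ∀ i ∈ σ, dist c (x i) ≤ r} :=
    (isClosed_setOf_exists_forall_mem_dist_le (σ : Set (Fin n)) r).measurableSet
  have hind (σ : Finset (Fin n)) :
      (fun x : Fin n → UnitAddCircle =>
        if ∃ c, ∀ i ∈ σ, dist c (x i) ≤ r then (-1 : ℝ) ^ (σ.card - 1) else 0)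
      = {x | ∃ c, ∀ i ∈ σ, dist c (x i) ≤ r}.indicator
          fun _ => (-1 : ℝ) ^ (σ.card - 1) :=
    rfl
  unfold cechEuler
  rw [integral_finsetSum _ fun σ _ => hind σ ▸ (integrable_const _).indicator (hmeas σ)]
  refine sum_congr rfl fun σ _ => ?_
  rw [hind σ, integral_indicator_const _ (hmeas σ), measureReal_exists_forall_mem_dist_le,
    smul_eq_mul, mul_comm]

theorem stmt9_general (n : ℕ) (hn : 1 ≤ n) (r : ℝ) :
    ∫ x : Fin n → AddCircle (1:ℝ), cechEuler x r
        ∂(Measure.pi fun _ : Fin n => (volume : Measure (AddCircle (1:ℝ))))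
    = 1 + ∑ k ∈ Finset.Icc 1 n,
        (-1 : ℝ) ^ k * (n.choose k : ℝ) * coverProb k (1 / 2 - r) := by
  rw [integral_cechEuler, ← sum_Icc_choose_smul_neg_one_pow_pred_mul_one_sub
    (Nat.one_le_iff_ne_zero.mp hn) fun k => coverProb k (1 / 2 - r)]
  simpa using sum_powerset_filter_nonempty_apply_card
    (fun k => (-1 : ℝ) ^ (k - 1) * (1 - coverProb k (1 / 2 - r))) (univ : Finset (Fin n))

/-- The expected Euler characteristic of the random Čech complex at radius `r` equals
`1 + Σ_{k=1}^n (-1)^k C(n,k) Q_k(1/2 - r)`, where `Q_k(s)` is the covering probability. -/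
theorem stmt9 (n : ℕ) (hn : 1 ≤ n) (r : ℝ) (hr0 : 0 < r) (hr1 : r < 1 / 2) :
    ∫ x : Fin n → AddCircle (1:ℝ), cechEuler x r
        ∂(Measure.pi fun _ : Fin n => (volume : Measure (AddCircle (1:ℝ))))
    = 1 + ∑ k ∈ Finset.Icc 1 n,
        (-1 : ℝ) ^ k * (n.choose k : ℝ) * coverProb k (1 / 2 - r) :=
  stmt9_general n hn r
end

section
/- Let m, n be integers with 2 ≤ m < √n and set r = 1/m − t with t ∈ [0, 1/(m(m+1))]. Then the error term E = Σ_{k=1}^{m−1} C(n,k) (1 − (k/m)(1−mt))^{k−1} ((k/m)(1−mt))^{n−k} satisfies E ≤ e · n^{m−1} · (1 − 1/(m+1))^{n−1}. -/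
/-!
Put `x = (k/m)(1 - mt)`; the constraint on `t` gives `0 ≤ x ≤ q := m/(m+1)` for `1 ≤ k ≤ m - 1`.
Hence the `k`-th term is at most `n^k/k! · q^(n-k) ≤ n^(m-1) q^(n-1) · (3/2)^(k-1)/k!`, using
`1/q = 1 + 1/m ≤ 3/2`, and `∑_{k ≥ 1} (3/2)^(k-1)/k! = (e^(3/2) - 1)/(3/2) ≤ e`.
-/

open Finset Real

open scoped Nat

lemma mul_sum_Icc_pow_pred_div_factorial_le {a : ℝ} (ha : 0 ≤ a) (N : ℕ) :
    a * ∑ k ∈ Icc 1 N, a ^ (k - 1) / k ! ≤ exp a - 1 := by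
  have hsplit : range (N + 1) = insert 0 (Icc 1 N) := by
    ext k; simp only [mem_range, mem_insert, mem_Icc]; omega
  have hexp := Real.sum_le_exp_of_nonneg ha (N + 1)
  rw [hsplit, sum_insert (by simp)] at hexp
  have hshift : a * ∑ k ∈ Icc 1 N, a ^ (k - 1) / k ! = ∑ k ∈ Icc 1 N, a ^ k / k ! := by
    rw [mul_sum]
    refine sum_congr rfl fun k hk => ?_
    obtain ⟨j, rfl⟩ : ∃ j, k = j + 1 := ⟨k - 1, by grind⟩
    rw [Nat.add_sub_cancel, pow_succ]
    ring
  simp only [pow_zero, Nat.factorial_zero, Nat.cast_one, div_one] at hexp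
  linarith

lemma exp_three_halves_le : exp (3 / 2) ≤ 3 / 2 * exp 1 + 1 := by
  have hcube : exp (3 / 2) * exp (3 / 2) = exp 1 * exp 1 * exp 1 := by
    simp only [← Real.exp_add]; norm_num
  nlinarith [Real.exp_one_lt_d9, Real.exp_one_gt_d9, Real.exp_pos (3 / 2)]

lemma sum_Icc_three_halves_pow_pred_div_factorial_le_exp_one (N : ℕ) :
    ∑ k ∈ Icc 1 N, (3 / 2 : ℝ) ^ (k - 1) / k ! ≤ exp 1 := by
  have h := mul_sum_Icc_pow_pred_div_factorial_le (a := 3 / 2) (by norm_num) N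
  linarith [exp_three_halves_le]

lemma choose_le_pow_div_factorial {n k j : ℕ} (hk : 1 ≤ k) (hkj : k ≤ j) :
    (n.choose k : ℝ) ≤ (n : ℝ) ^ j / k ! := by
  rcases n.eq_zero_or_pos with rfl | hn
  · simp only [Nat.choose_eq_zero_of_lt hk, Nat.cast_zero]
    positivity
  calc (n.choose k : ℝ) ≤ (n : ℝ) ^ k / k ! := Nat.choose_le_pow_div k n
    _ ≤ (n : ℝ) ^ j / k ! := by
      gcongr
      exact_mod_cast hn

lemma pow_sub_le_pow_pred_mul_inv_pow {q : ℝ} (hq0 : 0 < q) (hq1 : q ≤ 1) {n k : ℕ}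
    (hk : 1 ≤ k) : q ^ (n - k) ≤ q ^ (n - 1) * q⁻¹ ^ (k - 1) := by
  rw [inv_pow, ← div_eq_mul_inv, le_div_iff₀ (pow_pos hq0 _), ← pow_add]
  exact pow_le_pow_of_le_one hq0.le hq1 (by omega)

lemma choose_mul_one_sub_pow_mul_pow_le {n k j : ℕ} {x q a : ℝ} (hk : 1 ≤ k) (hkj : k ≤ j)
    (hx0 : 0 ≤ x) (hxq : x ≤ q) (hq0 : 0 < q) (hq1 : q ≤ 1) (hqa : q⁻¹ ≤ a) :
    (n.choose k : ℝ) * (1 - x) ^ (k - 1) * x ^ (n - k)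
      ≤ (n : ℝ) ^ j * q ^ (n - 1) * (a ^ (k - 1) / k !) := by
  have hxpow : x ^ (n - k) ≤ q ^ (n - 1) * a ^ (k - 1) :=
    calc x ^ (n - k) ≤ q ^ (n - k) := by gcongr
      _ ≤ q ^ (n - 1) * q⁻¹ ^ (k - 1) := pow_sub_le_pow_pred_mul_inv_pow hq0 hq1 hk
      _ ≤ q ^ (n - 1) * a ^ (k - 1) := by gcongr
  calc (n.choose k : ℝ) * (1 - x) ^ (k - 1) * x ^ (n - k)
      ≤ (n : ℝ) ^ j / k ! * 1 * (q ^ (n - 1) * a ^ (k - 1)) := by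
        gcongr
        · exact pow_nonneg (by linarith) _
        · exact choose_le_pow_div_factorial hk hkj
        · exact pow_le_one₀ (by linarith) (by linarith)
    _ = (n : ℝ) ^ j * q ^ (n - 1) * (a ^ (k - 1) / k !) := by ring

lemma div_mul_one_sub_mul_mem_Icc {k m t : ℝ} (hk0 : 0 ≤ k) (hkm : k + 1 ≤ m) (ht0 : 0 ≤ t)
    (ht1 : t ≤ 1 / (m * (m + 1))) : k / m * (1 - m * t) ∈ Set.Icc 0 (m / (m + 1)) := by
  have hm : 0 < m := by linarith
  have hmt : m * t ≤ 1 / (m + 1) := by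
    calc m * t ≤ m * (1 / (m * (m + 1))) := by gcongr
      _ = 1 / (m + 1) := by field_simp
  have hmt1 : 1 / (m + 1) ≤ 1 := by rw [div_le_one (by linarith)]; linarith
  have hkm' : k / m ≤ m / (m + 1) := by
    rw [div_le_div_iff₀ hm (by linarith)]; nlinarith
  constructor
  · exact mul_nonneg (by positivity) (by linarith)
  · calc k / m * (1 - m * t) ≤ k / m * 1 := by gcongr; nlinarith
      _ ≤ m / (m + 1) := by rwa [mul_one]

theorem stmt13_general (m n : ℕ)
    (t : ℝ) (ht0 : 0 ≤ t) (ht1 : t ≤ 1 / ((m : ℝ) * (m + 1))) :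
    ∑ k ∈ Finset.Icc 1 (m - 1),
        (n.choose k : ℝ) * (1 - ((k : ℝ) / m) * (1 - m * t)) ^ (k - 1) *
          (((k : ℝ) / m) * (1 - m * t)) ^ (n - k)
      ≤ Real.exp 1 * (n : ℝ) ^ (m - 1) * (1 - 1 / ((m : ℝ) + 1)) ^ (n - 1) := by
  have hq : 1 - 1 / ((m : ℝ) + 1) = m / (m + 1) := by field_simp; ring
  rw [hq]
  calc _ ≤ ∑ k ∈ Icc 1 (m - 1),
        (n : ℝ) ^ (m - 1) * (m / (m + 1) : ℝ) ^ (n - 1) * ((3 / 2 : ℝ) ^ (k - 1) / k !) := by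
        refine sum_le_sum fun k hk => ?_
        obtain ⟨hk1, hkm⟩ := mem_Icc.mp hk
        have hm : (2 : ℝ) ≤ m := by exact_mod_cast (by omega : 2 ≤ m)
        have hkm' : (k : ℝ) + 1 ≤ m := by exact_mod_cast (by omega : k + 1 ≤ m)
        obtain ⟨hx0, hxq⟩ := div_mul_one_sub_mul_mem_Icc k.cast_nonneg hkm' ht0 ht1
        refine choose_mul_one_sub_pow_mul_pow_le hk1 hkm hx0 hxq (by positivity)
          (by rw [div_le_one (by positivity)]; linarith) ?_
        rw [inv_div, div_le_iff₀ (by positivity)]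
        linarith
    _ = (n : ℝ) ^ (m - 1) * (m / (m + 1) : ℝ) ^ (n - 1) *
          ∑ k ∈ Icc 1 (m - 1), (3 / 2 : ℝ) ^ (k - 1) / k ! := by rw [mul_sum]
    _ ≤ (n : ℝ) ^ (m - 1) * (m / (m + 1) : ℝ) ^ (n - 1) * exp 1 := by
        gcongr
        exact sum_Icc_three_halves_pow_pred_div_factorial_le_exp_one _
    _ = _ := by ring

/-- Error-term bound: for integers `2 ≤ m < √n` and `t ∈ [0, 1/(m(m+1))]`,
`E = Σ_{k=1}^{m-1} C(n,k) (1-(k/m)(1-mt))^(k-1) ((k/m)(1-mt))^(n-k)`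
satisfies `E ≤ e · n^(m-1) · (1 - 1/(m+1))^(n-1)`. -/
theorem stmt13 (m n : ℕ) (hm : 2 ≤ m) (hmn : (m : ℝ) < Real.sqrt n)
    (t : ℝ) (ht0 : 0 ≤ t) (ht1 : t ≤ 1 / ((m : ℝ) * (m + 1))) :
    ∑ k ∈ Finset.Icc 1 (m - 1),
        (n.choose k : ℝ) * (1 - ((k : ℝ) / m) * (1 - m * t)) ^ (k - 1) *
          (((k : ℝ) / m) * (1 - m * t)) ^ (n - k)
      ≤ Real.exp 1 * (n : ℝ) ^ (m - 1) * (1 - 1 / ((m : ℝ) + 1)) ^ (n - 1) :=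
  stmt13_general m n t ht0 ht1
end

section
/- Let m ≥ 2 and n > 2m² be integers with m < √n. Then for every λ ∈ [0,1], if |r − (n−m)/((n−1)m)| < (1−λ)√((m−1)(n−m))/(m(n−1)^{3/2}), then r ∈ (1/(m+1), 1/m], and writing t = 1/m − r, the function f_{m,n}(t) = C(n,m)(mt)^{m−1}(1−mt)^{n−m} satisfies f_{m,n}(t) > λ · C(n,m)(m−1)^{m−1}(n−m)^{n−m}/(n−1)^{n−1}. -/
/-!
Put `A = m - 1`, `B = n - m`, `N = n - 1 = A + B` and `u = B - N m r`. Then `m t = (A + u) / N` and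
`1 - m t = (B - u) / N`, so `f_{m,n}(t) = C(n,m) A^A B^B / N^N · (1 + u/A)^A (1 - u/B)^B`. Bernoulli's
inequality for `(1 - u/a)(1 + u/a)` together with `(1 - u/a)^a ≤ e^{-u}` gives
`(1 + u/A)^A (1 - u/B)^B ≥ 1 - u²/A - u²/B = 1 - u² N / (A B)`, and the hypothesis on `r` says exactly
that `u² < (1 - λ)² A B / N`, so the product exceeds `1 - (1 - λ)² ≥ λ`. The bound `u² < A` also places `r` in `(1/(m+1), 1/m]`
once `n > 2m²`.
-/

open Real

lemma abs_le_natCast_of_sq_le {a : ℕ} {u : ℝ} (h : u ^ 2 ≤ a) : |u| ≤ a := by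
  refine abs_le_of_sq_le_sq (h.trans ?_) a.cast_nonneg
  exact_mod_cast Nat.le_self_pow two_ne_zero a

lemma one_sub_sq_div_mul_exp_le_one_add_div_pow {a : ℕ} {u : ℝ} (hu : |u| ≤ a) :
    (1 - u ^ 2 / a) * exp u ≤ (1 + u / a) ^ a := by
  rcases a.eq_zero_or_pos with rfl | ha
  · simp_all
  have ha' : (0 : ℝ) < a := by exact_mod_cast ha
  obtain ⟨hua, hau⟩ := abs_le.mp hu
  have hbase : 0 ≤ 1 + u / a := by
    have : -1 ≤ u / a := by rw [le_div_iff₀ ha']; linarith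
    linarith
  have bernoulli : 1 - u ^ 2 / a ≤ ((1 - u / a) * (1 + u / a)) ^ a := by
    have hsq : (u / a) ^ 2 ≤ 1 := by
      rw [div_pow, div_le_one (by positivity)]
      nlinarith
    calc 1 - u ^ 2 / a = 1 + a * -(u / a) ^ 2 := by field_simp; ring
      _ ≤ (1 + -(u / a) ^ 2) ^ a := one_add_mul_le_pow (by linarith) a
      _ = ((1 - u / a) * (1 + u / a)) ^ a := by ring
  calc (1 - u ^ 2 / a) * exp u ≤ (1 - u / a) ^ a * (1 + u / a) ^ a * exp u := by
        rw [← mul_pow]; gcongr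
    _ ≤ exp (-u) * (1 + u / a) ^ a * exp u := by
        gcongr; exact one_sub_div_pow_le_exp_neg hau
    _ = (1 + u / a) ^ a := by
        rw [exp_neg]; field_simp

lemma one_sub_sq_div_sub_sq_div_le_pow_mul_pow {a b : ℕ} {u : ℝ} (ha : u ^ 2 ≤ a)
    (hb : u ^ 2 ≤ b) : 1 - u ^ 2 / a - u ^ 2 / b ≤ (1 + u / a) ^ a * (1 - u / b) ^ b := by
  have hua := one_sub_sq_div_mul_exp_le_one_add_div_pow (abs_le_natCast_of_sq_le ha)
  have hub := one_sub_sq_div_mul_exp_le_one_add_div_pow (u := -u)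
    (abs_le_natCast_of_sq_le (by rwa [neg_sq]))
  rw [neg_sq, neg_div, ← sub_eq_add_neg] at hub
  have hfa : 0 ≤ 1 - u ^ 2 / a := sub_nonneg.mpr (div_le_one_of_le₀ ha a.cast_nonneg)
  have hfb : 0 ≤ 1 - u ^ 2 / b := sub_nonneg.mpr (div_le_one_of_le₀ hb b.cast_nonneg)
  calc 1 - u ^ 2 / a - u ^ 2 / b
      ≤ (1 - u ^ 2 / a) * (1 - u ^ 2 / b) := by
        nlinarith [mul_nonneg (div_nonneg (sq_nonneg u) a.cast_nonneg)
          (div_nonneg (sq_nonneg u) b.cast_nonneg)]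
    _ = (1 - u ^ 2 / a) * exp u * ((1 - u ^ 2 / b) * exp (-u)) := by
        rw [exp_neg]; field_simp
    _ ≤ (1 + u / a) ^ a * (1 - u / b) ^ b :=
        mul_le_mul hua hub (by positivity) ((mul_nonneg hfa (exp_pos u).le).trans hua)

lemma sq_le_of_sq_div_add_sq_div_lt {a b c u : ℝ} (ha : 0 < a) (hb : 0 ≤ b) (hc : c ≤ 1)
    (h : u ^ 2 / a + u ^ 2 / b < c) : u ^ 2 ≤ a := by
  have : u ^ 2 / a < 1 := by linarith [div_nonneg (sq_nonneg u) hb]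
  exact ((div_lt_one ha).mp this).le

lemma lt_one_add_div_pow_mul_one_sub_div_pow {a b : ℕ} (ha : 0 < a) (hb : 0 < b)
    {lam u : ℝ} (hlam : lam ∈ Set.Icc (0 : ℝ) 1) (hu : u ^ 2 / a + u ^ 2 / b < (1 - lam) ^ 2) :
    lam < (1 + u / a) ^ a * (1 - u / b) ^ b := by
  obtain ⟨hl0, hl1⟩ := hlam
  have hl : (1 - lam) ^ 2 ≤ 1 := by nlinarith
  have hua := sq_le_of_sq_div_add_sq_div_lt (Nat.cast_pos.mpr ha) b.cast_nonneg hl hu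
  have hub := sq_le_of_sq_div_add_sq_div_lt (Nat.cast_pos.mpr hb) a.cast_nonneg hl
    (by rwa [add_comm])
  nlinarith [one_sub_sq_div_sub_sq_div_le_pow_mul_pow hua hub]

lemma lt_div_add_pow_mul_div_sub_pow {a b : ℕ} (ha : 0 < a) (hb : 0 < b)
    {lam u : ℝ} (hlam : lam ∈ Set.Icc (0 : ℝ) 1) (hu : u ^ 2 / a + u ^ 2 / b < (1 - lam) ^ 2) :
    lam * ((a : ℝ) ^ a * b ^ b / (a + b) ^ (a + b)) <
      ((a + u) / (a + b)) ^ a * ((b - u) / (a + b)) ^ b := by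
  have ha' : (0 : ℝ) < a := by exact_mod_cast ha
  have hb' : (0 : ℝ) < b := by exact_mod_cast hb
  calc lam * ((a : ℝ) ^ a * b ^ b / (a + b) ^ (a + b))
      < (a : ℝ) ^ a * b ^ b / (a + b) ^ (a + b) * ((1 + u / a) ^ a * (1 - u / b) ^ b) := by
        rw [mul_comm lam]
        exact mul_lt_mul_of_pos_left (lt_one_add_div_pow_mul_one_sub_div_pow ha hb hlam hu)
          (by positivity)
    _ = ((a + u) / (a + b)) ^ a * ((b - u) / (a + b)) ^ b := by
        rw [one_add_div ha'.ne', one_sub_div hb'.ne', div_pow, div_pow, div_pow, div_pow, pow_add]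
        field_simp

lemma sq_div_add_sq_div_lt {a b c u : ℝ} (ha : 0 < a) (hb : 0 < b)
    (h : u ^ 2 < c * (a * b) / (a + b)) : u ^ 2 / a + u ^ 2 / b < c :=
  calc u ^ 2 / a + u ^ 2 / b = u ^ 2 * (a + b) / (a * b) := by field_simp; ring
    _ < c * (a * b) / (a + b) * (a + b) / (a * b) := by gcongr
    _ = c := by field_simp

lemma mem_Ioc_of_sq_sub_mul_le {m n r : ℝ} (hm : 2 ≤ m) (hn : 2 * m ^ 2 < n)
    (h : (n - m - (n - 1) * m * r) ^ 2 ≤ m - 1) :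
    r ∈ Set.Ioc (1 / (m + 1)) (1 / m) := by
  set u := n - m - (n - 1) * m * r with hu
  have hN : 0 < n - 1 := by nlinarith
  constructor
  · have hsq : (u * (m + 1)) ^ 2 < (m ^ 2) ^ 2 := by
      -- `u² (m + 1)² ≤ (m - 1)(m + 1)² < m⁴`
      rw [mul_pow]
      nlinarith [mul_le_mul_of_nonneg_right h (sq_nonneg (m + 1))]
    have hum : u * (m + 1) < m ^ 2 := (abs_lt_of_sq_lt_sq' hsq (by positivity)).2
    have hprod : 0 < (n - 1) * m * (r * (m + 1) - 1) := by rw [hu] at hum; nlinarith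
    rw [div_lt_iff₀ (by linarith), ← sub_pos]
    exact pos_of_mul_pos_right hprod (by positivity)
  · have : 1 - m ≤ u := by nlinarith [sq_nonneg (u + m - 1)]
    rw [le_div_iff₀ (by linarith)]
    nlinarith

lemma sq_mul_sub_lt_of_abs_sub_lt {N m x r c : ℝ} (hN : 0 < N) (hm : 0 < m)
    (h : |r - x| < c / (m * N ^ (3 / 2 : ℝ))) : (N * m * (x - r)) ^ 2 < c ^ 2 / N := by
  have hN32 : N ^ (3 / 2 : ℝ) = N * √N := by
    rw [show (3 / 2 : ℝ) = 1 + 1 / 2 by norm_num, rpow_add hN, rpow_one, ← sqrt_eq_rpow]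
  have hsN : 0 < √N := sqrt_pos.mpr hN
  have habs : |N * m * (x - r)| < c / √N := by
    rw [abs_mul, abs_of_pos (by positivity), abs_sub_comm]
    calc N * m * |r - x| < N * m * (c / (m * N ^ (3 / 2 : ℝ))) := by gcongr
      _ = c / √N := by rw [hN32]; field_simp
  calc (N * m * (x - r)) ^ 2 = |N * m * (x - r)| ^ 2 := (sq_abs _).symm
    _ < (c / √N) ^ 2 := by gcongr
    _ = c ^ 2 / N := by rw [div_pow, sq_sqrt hN.le]

theorem stmt19_general (m n : ℕ) (hm : 2 ≤ m) (hn : 2 * m ^ 2 < n)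
    (lam : ℝ) (hlam : lam ∈ Set.Icc (0:ℝ) 1) (r : ℝ)
    (hr : |r - ((n : ℝ) - m) / (((n : ℝ) - 1) * m)| <
      (1 - lam) * Real.sqrt (((m : ℝ) - 1) * ((n : ℝ) - m)) /
        ((m : ℝ) * ((n : ℝ) - 1) ^ ((3 : ℝ) / 2))) :
    r ∈ Set.Ioc (1 / ((m : ℝ) + 1)) (1 / (m : ℝ)) ∧
    (n.choose m : ℝ) * ((m : ℝ) * (1 / (m : ℝ) - r)) ^ (m - 1) *
        (1 - (m : ℝ) * (1 / (m : ℝ) - r)) ^ (n - m)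
      > lam * ((n.choose m : ℝ) * ((m : ℝ) - 1) ^ (m - 1) * ((n : ℝ) - m) ^ (n - m) /
          ((n : ℝ) - 1) ^ (n - 1)) := by
  have hmn : m < n := by nlinarith
  have hm' : (2 : ℝ) ≤ m := by exact_mod_cast hm
  have hn' : 2 * (m : ℝ) ^ 2 < n := by exact_mod_cast hn
  have hA : ((m - 1 : ℕ) : ℝ) = m - 1 := by rw [Nat.cast_sub (by omega), Nat.cast_one]
  have hB : ((n - m : ℕ) : ℝ) = n - m := Nat.cast_sub hmn.le
  have hA0 : (0 : ℝ) < m - 1 := by linarith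
  have hB0 : (0 : ℝ) < n - m := by nlinarith
  have hN0 : (0 : ℝ) < n - 1 := by linarith
  have hN : (m : ℝ) - 1 + (n - m) = n - 1 := by ring
  set u : ℝ := n - m - (n - 1) * m * r with hu
  have hsum : u ^ 2 / (m - 1) + u ^ 2 / (n - m) < (1 - lam) ^ 2 := by
    refine sq_div_add_sq_div_lt hA0 hB0 ?_
    have hux : ((n : ℝ) - 1) * m * ((n - m) / ((n - 1) * m) - r) = u := by
      rw [mul_sub, mul_div_cancel₀ _ (by positivity)]
    have := sq_mul_sub_lt_of_abs_sub_lt hN0 (by positivity) hr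
    rwa [hux, mul_pow, sq_sqrt (mul_pos hA0 hB0).le, ← hN] at this
  refine ⟨mem_Ioc_of_sq_sub_mul_le hm' hn' (sq_le_of_sq_div_add_sq_div_lt hA0 hB0.le ?_ hsum), ?_⟩
  · nlinarith [hlam.1, hlam.2]
  have hgain := lt_div_add_pow_mul_div_sub_pow (a := m - 1) (b := n - m) (by omega) (by omega)
    hlam (by rwa [hA, hB])
  rw [hA, hB, hN, show m - 1 + (n - m) = n - 1 by omega] at hgain
  have hmt : (m : ℝ) * (1 / m - r) = (m - 1 + u) / (n - 1) := by
    rw [hu]; field_simp; ring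
  have hmt' : 1 - (m : ℝ) * (1 / m - r) = (n - m - u) / (n - 1) := by
    rw [hu]; field_simp; ring
  have hC : (0 : ℝ) < n.choose m := Nat.cast_pos.mpr (Nat.choose_pos hmn.le)
  rw [hmt', hmt]
  exact lt_of_eq_of_lt (by ring) ((mul_lt_mul_of_pos_left hgain hC).trans_eq (by ring))

/-- For integers `m ≥ 2`, `n > 2m²`, `m < √n`, and `λ ∈ [0,1]`: if
`|r - (n-m)/((n-1)m)| < (1-λ)√((m-1)(n-m))/(m(n-1)^(3/2))` then `r ∈ (1/(m+1), 1/m]` and,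
with `t = 1/m - r`, `f_{m,n}(t) = C(n,m)(mt)^(m-1)(1-mt)^(n-m)` satisfies
`f_{m,n}(t) > λ · C(n,m)(m-1)^(m-1)(n-m)^(n-m)/(n-1)^(n-1)`. -/
theorem stmt19 (m n : ℕ) (hm : 2 ≤ m) (hmn : (m : ℝ) < Real.sqrt n) (hn : 2 * m ^ 2 < n)
    (lam : ℝ) (hlam : lam ∈ Set.Icc (0:ℝ) 1) (r : ℝ)
    (hr : |r - ((n : ℝ) - m) / (((n : ℝ) - 1) * m)| <
      (1 - lam) * Real.sqrt (((m : ℝ) - 1) * ((n : ℝ) - m)) /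
        ((m : ℝ) * ((n : ℝ) - 1) ^ ((3 : ℝ) / 2))) :
    r ∈ Set.Ioc (1 / ((m : ℝ) + 1)) (1 / (m : ℝ)) ∧
    (n.choose m : ℝ) * ((m : ℝ) * (1 / (m : ℝ) - r)) ^ (m - 1) *
        (1 - (m : ℝ) * (1 / (m : ℝ) - r)) ^ (n - m)
      > lam * ((n.choose m : ℝ) * ((m : ℝ) - 1) ^ (m - 1) * ((n : ℝ) - m) ^ (n - m) /
          ((n : ℝ) - 1) ^ (n - 1)) :=
  stmt19_general m n hm hn lam hlam r hr
end
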